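/- arXiv:2112.00335 — 7 statements merged into one kernel-verified Lean document; each statement's English description precedes it below -/
import Mathlib

section
/- Let k be a field of characteristic zero. A symmetric 3×3 matrix A over k satisfies det A = 0 if and only if A can be written as A = B + C where B and C are symmetric 3×3 matrices of rank at most 1. (This identifies the secant variety of the Veronese surface with the cubic hypersurface of singular symmetric matrices.) -/
open Matrix Module

private lemma fin3_cover : ∀ i0 i : Fin 3, i = i0 ∨ i = i0 + 1 ∨ i = i0 + 2 := by decide

private lemma fin3_ne12 : ∀ i0 : Fin 3, (i0 + 1 : Fin 3) ≠ i0 + 2 := by decide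

private lemma fin3_ne01 : ∀ i0 : Fin 3, (i0 : Fin 3) ≠ i0 + 1 := by decide

private lemma fin3_ne02 : ∀ i0 : Fin 3, (i0 : Fin 3) ≠ i0 + 2 := by decide

private lemma matrix_rank_add_le {k : Type*} [Field k] {n : ℕ}
    (B C : Matrix (Fin n) (Fin n) k) : (B + C).rank ≤ B.rank + C.rank := by
  rw [Matrix.rank, Matrix.rank, Matrix.rank]
  have hle : LinearMap.range (B + C).mulVecLin ≤
      LinearMap.range B.mulVecLin ⊔ LinearMap.range C.mulVecLin := by
    rintro x ⟨y, rfl⟩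
    exact Submodule.mem_sup.2 ⟨B.mulVecLin y, LinearMap.mem_range_self _ _,
      C.mulVecLin y, LinearMap.mem_range_self _ _, by simp [Matrix.mulVecLin_add]⟩
  exact (Submodule.finrank_mono hle).trans
    (Submodule.finrank_add_le_finrank_add_finrank _ _)

/-- Over a field of characteristic zero, a symmetric 3×3 matrix is singular
if and only if it is a sum of two symmetric matrices of rank at most 1. -/
theorem secant_variety_veronese_eq_det_zero
    (k : Type*) [Field k] [CharZero k]
    (A : Matrix (Fin 3) (Fin 3) k) (hA : A.IsSymm) :
    A.det = 0 ↔
      ∃ B C : Matrix (Fin 3) (Fin 3) k,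
        B.IsSymm ∧ C.IsSymm ∧ B.rank ≤ 1 ∧ C.rank ≤ 1 ∧ A = B + C := by
  classical
  constructor
  · intro hdet
    have h2 : Invertible (2 : k) := invertibleOfNonzero two_ne_zero
    set b : Basis (Fin 3) k (Fin 3 → k) := Pi.basisFun k (Fin 3) with hb
    have hsymm : (Matrix.toBilin' A).IsSymm := by
      rw [LinearMap.BilinForm.isSymm_def]
      intro x y
      simp only [RingHom.id_apply, Matrix.toBilin'_apply']
      rw [Matrix.dotProduct_mulVec, ← Matrix.mulVec_transpose, hA.eq, dotProduct_comm]
    have hsymmb : (Matrix.toBilin b A).IsSymm := by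
      rw [hb, Matrix.toBilin_basisFun]; exact hsymm
    obtain ⟨v0, hv0⟩ := LinearMap.BilinForm.exists_orthogonal_basis (LinearMap.BilinForm.isSymm_iff.1 hsymmb)
    have hfr : finrank k (Fin 3 → k) = 3 := Module.finrank_fin_fun k
    let v : Basis (Fin 3) k (Fin 3 → k) := v0.reindex (finCongr hfr)
    have hv : ∀ i j : Fin 3, i ≠ j → (Matrix.toBilin b A) (v i) (v j) = 0 := by
      intro i j hij
      have hne : (finCongr hfr).symm i ≠ (finCongr hfr).symm j :=
        fun h => hij ((finCongr hfr).symm.injective h)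
      have h := hv0 hne
      simpa [v, Module.Basis.reindex_apply, LinearMap.IsOrtho, Function.onFun] using h
    set P : Matrix (Fin 3) (Fin 3) k := b.toMatrix v with hP
    haveI : Invertible P := b.invertibleToMatrix v
    set D : Matrix (Fin 3) (Fin 3) k := LinearMap.BilinForm.toMatrix v (Matrix.toBilin b A)
      with hDdef
    have key : Pᵀ * A * P = D := by
      rw [hDdef]
      conv_lhs => rw [← BilinForm.toMatrix_toBilin (b := b) A]
      exact BilinForm.toMatrix_mul_basis_toMatrix b v (Matrix.toBilin b A)
    set w : Fin 3 → k := fun i => D i i with hw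
    have hD : D = Matrix.diagonal w := by
      ext i j
      by_cases hij : i = j
      · subst hij; simp [Matrix.diagonal, hw]
      · simp only [Matrix.diagonal, Matrix.of_apply, if_neg hij]
        rw [hDdef]
        rw [LinearMap.BilinForm.toMatrix_apply]
        exact hv i j hij
    have hdetD : D.det = 0 := by
      rw [← key]
      simp [Matrix.det_mul, hdet]
    obtain ⟨i0, _, hi0⟩ : ∃ i ∈ Finset.univ, w i = 0 := by
      rw [hD, Matrix.det_diagonal] at hdetD
      exact Finset.prod_eq_zero_iff.1 hdetD
    set w1 : Fin 3 → k := Pi.single (i0 + 1) (w (i0 + 1)) with hw1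
    set w2 : Fin 3 → k := Pi.single (i0 + 2) (w (i0 + 2)) with hw2
    have hsplit : w = fun i => w1 i + w2 i := by
      funext i
      have hcover := fin3_cover i0 i
      have h12 := fin3_ne12 i0
      have h01 := fin3_ne01 i0
      have h02 := fin3_ne02 i0
      rcases hcover with rfl | rfl | rfl
      · simp [hw1, hw2, Pi.single_eq_of_ne h01, Pi.single_eq_of_ne h02, hi0]
      · simp [hw1, hw2, Pi.single_eq_of_ne h12.symm]
      · simp [hw1, hw2, Pi.single_eq_of_ne h12]
    set Q : Matrix (Fin 3) (Fin 3) k := P⁻¹ with hQ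
    haveI : Invertible Pᵀ := Matrix.invertibleTranspose P
    have hAQ : A = Qᵀ * D * Q := by
      rw [← key, hQ, Matrix.transpose_nonsing_inv, Matrix.mul_assoc (Pᵀ)⁻¹,
        Matrix.mul_inv_cancel_right_of_invertible, Matrix.inv_mul_cancel_left_of_invertible]
    have hrank : ∀ (j : Fin 3) (c : k),
        (Qᵀ * Matrix.diagonal (Pi.single j c) * Q).rank ≤ 1 := by
      intro j c
      calc (Qᵀ * Matrix.diagonal (Pi.single j c) * Q).rank
          ≤ (Qᵀ * Matrix.diagonal (Pi.single j c)).rank := Matrix.rank_mul_le_left _ _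
        _ ≤ (Matrix.diagonal (Pi.single j c)).rank := Matrix.rank_mul_le_right _ _
        _ ≤ 1 := by
            rw [Matrix.rank_diagonal]
            refine Fintype.card_le_one_iff.2 fun a b => ?_
            have ha : (a : Fin 3) = j := by
              by_contra h; exact a.2 (Pi.single_eq_of_ne h _)
            have hbj : (b : Fin 3) = j := by
              by_contra h; exact b.2 (Pi.single_eq_of_ne h _)
            exact Subtype.ext (ha.trans hbj.symm)
    have hsymmQ : ∀ (j : Fin 3) (c : k),
        (Qᵀ * Matrix.diagonal (Pi.single j c) * Q).IsSymm := by
      intro j c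
      simp [Matrix.IsSymm, Matrix.transpose_mul, Matrix.diagonal_transpose, Matrix.mul_assoc]
    refine ⟨Qᵀ * Matrix.diagonal w1 * Q, Qᵀ * Matrix.diagonal w2 * Q,
      hw1 ▸ hsymmQ _ _, hw2 ▸ hsymmQ _ _, hw1 ▸ hrank _ _, hw2 ▸ hrank _ _, ?_⟩
    rw [hAQ, hD, hsplit, ← Matrix.diagonal_add, Matrix.mul_add, Matrix.add_mul]
  · rintro ⟨B, C, -, -, hB, hC, rfl⟩
    by_contra hdet
    have hU : IsUnit (B + C) := (Matrix.isUnit_iff_isUnit_det _).2 (Ne.isUnit hdet)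
    have h3 : (B + C).rank = 3 := by
      rw [Matrix.rank_of_isUnit _ hU, Fintype.card_fin]
    have := (matrix_rank_add_le B C).trans (add_le_add hB hC)
    omega
end

section
/- Let k be an algebraically closed field of characteristic zero. A symmetric 3×3 matrix A over k satisfies det A = 0 if and only if there exist vectors u, w ∈ k³ with A = w uᵀ + u wᵀ. (This expresses that the secant variety of the Veronese surface coincides with its tangent variety: SX = TX.) -/
open Matrix

/-- Key pivot lemma: a singular symmetric 3×3 matrix with nonzero (0,0) entry
is a sum of two symmetric squares. -/
private lemma veronese_pivot0 {k : Type*} [Field k] [IsAlgClosed k]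
    (A : Matrix (Fin 3) (Fin 3) k) (hA : A.IsSymm) (hdet : A.det = 0)
    (ha : A 0 0 ≠ 0) :
    ∃ x y : Fin 3 → k, A = Matrix.vecMulVec x x + Matrix.vecMulVec y y := by
  have hb : A 1 0 = A 0 1 := (hA.apply 1 0).symm
  have hc : A 2 0 = A 0 2 := (hA.apply 2 0).symm
  have he : A 2 1 = A 1 2 := (hA.apply 2 1).symm
  rw [Matrix.det_fin_three, hb, hc, he] at hdet
  obtain ⟨s, hs⟩ := IsAlgClosed.exists_pow_nat_eq (A 0 0)⁻¹ zero_lt_two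
  have hs' : s ^ 2 * A 0 0 = 1 := by rw [hs]; field_simp
  have key : (A 0 0 * A 1 2 - A 0 1 * A 0 2) ^ 2
      = (A 0 0 * A 1 1 - A 0 1 * A 0 1) * (A 0 0 * A 2 2 - A 0 2 * A 0 2) := by
    linear_combination (-(A 0 0)) * hdet
  by_cases hd1 : A 0 0 * A 1 1 - A 0 1 * A 0 1 = 0
  · have he1 : A 0 0 * A 1 2 - A 0 1 * A 0 2 = 0 := by
      have h2 : (A 0 0 * A 1 2 - A 0 1 * A 0 2) ^ 2 = 0 := by rw [key, hd1, zero_mul]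
      exact sq_eq_zero_iff.mp h2
    obtain ⟨r, hr⟩ :=
      IsAlgClosed.exists_pow_nat_eq ((A 0 0 * A 2 2 - A 0 2 * A 0 2) * (A 0 0)⁻¹) zero_lt_two
    have hr2 : r ^ 2 * A 0 0 = A 0 0 * A 2 2 - A 0 2 * A 0 2 := by rw [hr]; field_simp
    refine ⟨fun i => s * ![A 0 0, A 0 1, A 0 2] i, ![0, 0, r], ?_⟩
    ext i j
    fin_cases i <;> fin_cases j <;>
      simp only [Matrix.add_apply, Matrix.vecMulVec_apply, Matrix.cons_val_zero,
        Matrix.cons_val_one, Matrix.head_cons, Matrix.head_fin_const, Fin.isValue,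
        Matrix.cons_val_two, Matrix.tail_cons, Fin.reduceFinMk]
    · linear_combination (-(A 0 0)) * hs'
    · linear_combination (-(A 0 1)) * hs'
    · linear_combination (-(A 0 2)) * hs'
    · rw [hb]; linear_combination (-(A 0 1)) * hs'
    · linear_combination (-(A 1 1)) * hs' + s ^ 2 * hd1
    · linear_combination (-(A 1 2)) * hs' + s ^ 2 * he1
    · rw [hc]; linear_combination (-(A 0 2)) * hs'
    · rw [he]; linear_combination (-(A 1 2)) * hs' + s ^ 2 * he1
    · linear_combination (r ^ 2 - A 2 2) * hs' - s ^ 2 * hr2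
  · obtain ⟨t, ht⟩ := IsAlgClosed.exists_pow_nat_eq
      ((A 0 0 * (A 0 0 * A 1 1 - A 0 1 * A 0 1))⁻¹) zero_lt_two
    have ht' : t ^ 2 * (A 0 0 * (A 0 0 * A 1 1 - A 0 1 * A 0 1)) = 1 := by
      rw [ht]; exact inv_mul_cancel₀ (mul_ne_zero ha hd1)
    refine ⟨fun i => s * ![A 0 0, A 0 1, A 0 2] i,
      fun i => t * ![0, A 0 0 * A 1 1 - A 0 1 * A 0 1, A 0 0 * A 1 2 - A 0 1 * A 0 2] i, ?_⟩
    ext i j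
    fin_cases i <;> fin_cases j <;>
      simp only [Matrix.add_apply, Matrix.vecMulVec_apply, Matrix.cons_val_zero,
        Matrix.cons_val_one, Matrix.head_cons, Matrix.head_fin_const, Fin.isValue,
        Matrix.cons_val_two, Matrix.tail_cons, Fin.reduceFinMk]
    · linear_combination (-(A 0 0)) * hs'
    · linear_combination (-(A 0 1)) * hs'
    · linear_combination (-(A 0 2)) * hs'
    · rw [hb]; linear_combination (-(A 0 1)) * hs'
    · linear_combination
        (t ^ 2 * (A 0 0 * A 1 1 - A 0 1 * A 0 1) ^ 2 - A 1 1) * hs'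
          - s ^ 2 * (A 0 0 * A 1 1 - A 0 1 * A 0 1) * ht'
    · linear_combination
        (t ^ 2 * (A 0 0 * A 1 1 - A 0 1 * A 0 1) * (A 0 0 * A 1 2 - A 0 1 * A 0 2) - A 1 2) * hs'
          - s ^ 2 * (A 0 0 * A 1 2 - A 0 1 * A 0 2) * ht'
    · rw [hc]; linear_combination (-(A 0 2)) * hs'
    · rw [he]; linear_combination
        (t ^ 2 * (A 0 0 * A 1 1 - A 0 1 * A 0 1) * (A 0 0 * A 1 2 - A 0 1 * A 0 2) - A 1 2) * hs'
          - s ^ 2 * (A 0 0 * A 1 2 - A 0 1 * A 0 2) * ht'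
    · linear_combination
        (t ^ 2 * (A 0 0 * A 1 1 - A 0 1 * A 0 1) * (A 0 0 * A 2 2 - A 0 2 * A 0 2) - A 2 2) * hs'
          - s ^ 2 * (A 0 0 * A 2 2 - A 0 2 * A 0 2) * ht'
          - t ^ 2 * key

/-- Pivot lemma transported along a permutation of indices. -/
private lemma veronese_pivot_perm {k : Type*} [Field k] [IsAlgClosed k]
    (σ : Equiv.Perm (Fin 3))
    (A : Matrix (Fin 3) (Fin 3) k) (hA : A.IsSymm) (hdet : A.det = 0)
    (ha : A (σ 0) (σ 0) ≠ 0) :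
    ∃ x y : Fin 3 → k, A = Matrix.vecMulVec x x + Matrix.vecMulVec y y := by
  have hsymm : (A.submatrix σ σ).IsSymm := by
    ext i j
    simp only [Matrix.transpose_apply, Matrix.submatrix_apply]
    exact hA.apply (σ i) (σ j)
  have hdet' : (A.submatrix σ σ).det = 0 := by
    rw [Matrix.det_submatrix_equiv_self]; exact hdet
  obtain ⟨x, y, hxy⟩ := veronese_pivot0 _ hsymm hdet' (by simpa using ha)
  refine ⟨fun i => x (σ⁻¹ i), fun i => y (σ⁻¹ i), ?_⟩
  ext i j
  have h2 := congrFun (congrFun hxy (σ⁻¹ i)) (σ⁻¹ j)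
  simpa [Matrix.submatrix_apply, Matrix.vecMulVec_apply, Matrix.add_apply] using h2

/-- Over an algebraically closed field of characteristic zero, a symmetric 3×3
matrix is singular if and only if it can be written as `w uᵀ + u wᵀ`:
the secant variety of the Veronese surface equals its tangent variety. -/
theorem secant_eq_tangent_veronese
    (k : Type*) [Field k] [IsAlgClosed k] [CharZero k]
    (A : Matrix (Fin 3) (Fin 3) k) (hA : A.IsSymm) :
    A.det = 0 ↔
      ∃ u w : Fin 3 → k,
        A = Matrix.vecMulVec w u + Matrix.vecMulVec u w := by
  have hb : A 1 0 = A 0 1 := (hA.apply 1 0).symm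
  have hc : A 2 0 = A 0 2 := (hA.apply 2 0).symm
  have he : A 2 1 = A 1 2 := (hA.apply 2 1).symm
  constructor
  · intro hdet
    have convert_xy : (∃ x y : Fin 3 → k,
        A = Matrix.vecMulVec x x + Matrix.vecMulVec y y) →
        ∃ u w : Fin 3 → k, A = Matrix.vecMulVec w u + Matrix.vecMulVec u w := by
      rintro ⟨x, y, hxy⟩
      obtain ⟨i, hi⟩ := IsAlgClosed.exists_pow_nat_eq (-1 : k) zero_lt_two
      refine ⟨fun j => x j + i * y j, fun j => (2 : k)⁻¹ * (x j - i * y j), ?_⟩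
      rw [hxy]
      ext p q
      simp only [Matrix.add_apply, Matrix.vecMulVec_apply]
      linear_combination (y p * y q) * hi
    by_cases h00 : A 0 0 = 0
    · by_cases h11 : A 1 1 = 0
      · by_cases h22 : A 2 2 = 0
        · -- all diagonal entries vanish
          rw [Matrix.det_fin_three, hb, hc, he] at hdet
          have hbce : A 0 1 * (A 0 2 * A 1 2) = 0 := by
            linear_combination (2 : k)⁻¹ * hdet
              + (2 : k)⁻¹ * (A 1 2 ^ 2 - A 1 1 * A 2 2) * h00
              + (2 : k)⁻¹ * A 0 2 ^ 2 * h11 + (2 : k)⁻¹ * A 0 1 ^ 2 * h22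
          rcases mul_eq_zero.mp hbce with h | h2
          · refine ⟨![A 0 2, A 1 2, 0], ![0, 0, 1], ?_⟩
            ext p q
            fin_cases p <;> fin_cases q <;>
              simp only [Matrix.add_apply, Matrix.vecMulVec_apply, Matrix.cons_val_zero,
                Matrix.cons_val_one, Matrix.head_cons, Matrix.head_fin_const, Fin.isValue,
                Matrix.cons_val_two, Matrix.tail_cons, Fin.reduceFinMk]
            · linear_combination h00
            · linear_combination h
            · ring
            · rw [hb]; linear_combination h
            · linear_combination h11
            · ring
            · rw [hc]; ring
            · rw [he]; ring
            · linear_combination h22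
          · rcases mul_eq_zero.mp h2 with h | h
            · refine ⟨![A 0 1, 0, A 1 2], ![0, 1, 0], ?_⟩
              ext p q
              fin_cases p <;> fin_cases q <;>
                simp only [Matrix.add_apply, Matrix.vecMulVec_apply, Matrix.cons_val_zero,
                  Matrix.cons_val_one, Matrix.head_cons, Matrix.head_fin_const, Fin.isValue,
                  Matrix.cons_val_two, Matrix.tail_cons, Fin.reduceFinMk]
              · linear_combination h00
              · ring
              · linear_combination h
              · rw [hb]; ring
              · linear_combination h11
              · ring
              · rw [hc]; linear_combination h
              · rw [he]; ring
              · linear_combination h22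
            · refine ⟨![0, A 0 1, A 0 2], ![1, 0, 0], ?_⟩
              ext p q
              fin_cases p <;> fin_cases q <;>
                simp only [Matrix.add_apply, Matrix.vecMulVec_apply, Matrix.cons_val_zero,
                  Matrix.cons_val_one, Matrix.head_cons, Matrix.head_fin_const, Fin.isValue,
                  Matrix.cons_val_two, Matrix.tail_cons, Fin.reduceFinMk]
              · linear_combination h00
              · ring
              · ring
              · rw [hb]; ring
              · linear_combination h11
              · linear_combination h
              · rw [hc]; ring
              · rw [he]; linear_combination h
              · linear_combination h22
        · exact convert_xy
            (veronese_pivot_perm (Equiv.swap 0 2) A hA hdet (by simpa using h22))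
      · exact convert_xy
          (veronese_pivot_perm (Equiv.swap 0 1) A hA hdet (by simpa using h11))
    · exact convert_xy (veronese_pivot0 A hA hdet h00)
  · rintro ⟨u, w, rfl⟩
    rw [Matrix.det_fin_three]
    simp only [Matrix.add_apply, Matrix.vecMulVec_apply]
    ring
end

section
/- Let k be a field of characteristic zero and let v, w, u ∈ k³ with v ≠ 0. If v vᵀ = w uᵀ + u wᵀ, then v is a scalar multiple of w. Equivalently, every matrix of rank exactly 1 lying in T_w = {w uᵀ + u wᵀ : u ∈ k³} is a scalar multiple of w wᵀ. (Hence the embedded tangent plane of the Veronese surface X at a point x meets X only at x.) -/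
/-- Over a field of characteristic zero, if `v vᵀ = w uᵀ + u wᵀ` with `v ≠ 0`,
then `v` is a scalar multiple of `w`: every rank-1 matrix lying in the
embedded tangent plane `T_w` of the Veronese surface is a multiple of `w wᵀ`,
hence the tangent plane at a point meets the Veronese surface only at that
point. -/
theorem rank_one_in_tangent_plane_veronese
    (k : Type*) [Field k] [CharZero k]
    (v w u : Fin 3 → k) (hv : v ≠ 0)
    (h : Matrix.vecMulVec v v = Matrix.vecMulVec w u + Matrix.vecMulVec u w) :
    ∃ c : k, v = c • w := by
  have e : ∀ i j, v i * v j = w i * u j + u i * w j := by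
    intro i j
    have := congrFun (congrFun h i) j
    simpa [Matrix.vecMulVec, Matrix.add_apply] using this
  have key : ∀ i j, v i * w j = v j * w i := by
    intro i j
    have sq : (v i * w j - v j * w i) ^ 2 = 0 := by
      linear_combination (w j) ^ 2 * (e i i) - 2 * (w i) * (w j) * (e i j)
        + (w i) ^ 2 * (e j j)
    have h0 := pow_eq_zero_iff (n := 2) (by norm_num) |>.mp sq
    linear_combination h0
  have hw : w ≠ 0 := by
    rintro rfl
    apply hv
    funext i
    have := e i i
    simp at this
    exact this
  obtain ⟨j, hj⟩ : ∃ j, w j ≠ 0 := by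
    by_contra hc
    push_neg at hc
    exact hw (funext hc)
  refine ⟨v j / w j, funext fun i => ?_⟩
  have := key i j
  simp only [Pi.smul_apply, smul_eq_mul]
  field_simp
  linear_combination this
end

section
/- Let k be an algebraically closed field of characteristic zero, and let L be a 2-dimensional subspace of the space of symmetric 3×3 matrices over k such that every nonzero element of L has rank exactly 2. Then there exists a nonzero vector w ∈ k³, unique up to scalar multiplication, such that L ⊆ T_w = {w uᵀ + u wᵀ : u ∈ k³}. (Every non-secant line on the secant cubic of the Veronese surface lies in a unique embedded tangent plane of the Veronese surface.) -/
open Matrix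

namespace VeroneseAux

variable {k : Type*} [Field k]

/-- cross product -/
def cp (a b : Fin 3 → k) : Fin 3 → k :=
  ![a 1 * b 2 - a 2 * b 1, a 2 * b 0 - a 0 * b 2, a 0 * b 1 - a 1 * b 0]

lemma dot_cp_left (a b : Fin 3 → k) : a ⬝ᵥ cp a b = 0 := by
  simp [cp, dotProduct, Fin.sum_univ_three]; ring

lemma dot_cp_right (a b : Fin 3 → k) : b ⬝ᵥ cp a b = 0 := by
  simp [cp, dotProduct, Fin.sum_univ_three]; ring

lemma cp_eq_zero {a b : Fin 3 → k} (ha : a ≠ 0) (h : cp a b = 0) : ∃ t : k, b = t • a := by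
  obtain ⟨i, hi⟩ : ∃ i, a i ≠ 0 := by
    by_contra hc; push_neg at hc; exact ha (funext fun i => hc i)
  have h0 := congrFun h 0
  have h1 := congrFun h 1
  have h2 := congrFun h 2
  simp [cp] at h0 h1 h2
  fin_cases i
  · have hi' : a 0 ≠ 0 := hi
    have e0 : b 0 = b 0 / a 0 * a 0 := by field_simp
    have e1 : b 1 = b 0 / a 0 * a 1 := by field_simp; linear_combination h2
    have e2 : b 2 = b 0 / a 0 * a 2 := by field_simp; linear_combination -h1
    exact ⟨b 0 / a 0, funext fun j => by fin_cases j <;> first | exact e0 | exact e1 | exact e2⟩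
  · have hi' : a 1 ≠ 0 := hi
    have e0 : b 0 = b 1 / a 1 * a 0 := by field_simp; linear_combination -h2
    have e1 : b 1 = b 1 / a 1 * a 1 := by field_simp
    have e2 : b 2 = b 1 / a 1 * a 2 := by field_simp; linear_combination h0
    exact ⟨b 1 / a 1, funext fun j => by fin_cases j <;> first | exact e0 | exact e1 | exact e2⟩
  · have hi' : a 2 ≠ 0 := hi
    have e0 : b 0 = b 2 / a 2 * a 0 := by field_simp; linear_combination h1
    have e1 : b 1 = b 2 / a 2 * a 1 := by field_simp; linear_combination -h0
    have e2 : b 2 = b 2 / a 2 * a 2 := by field_simp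
    exact ⟨b 2 / a 2, funext fun j => by fin_cases j <;> first | exact e0 | exact e1 | exact e2⟩

lemma fin3_mk0 (h : 0 < 3) : (⟨0, h⟩ : Fin 3) = 0 := rfl
lemma fin3_mk1 (h : 1 < 3) : (⟨1, h⟩ : Fin 3) = 1 := rfl
lemma fin3_mk2 (h : 2 < 3) : (⟨2, h⟩ : Fin 3) = 2 := rfl


lemma det_eq_zero_of_rank_two (A : Matrix (Fin 3) (Fin 3) k) (h : A.rank = 2) :
    A.det = 0 := by
  by_contra hd
  have hu : IsUnit A := (Matrix.isUnit_iff_isUnit_det A).mpr (isUnit_iff_ne_zero.mpr hd)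
  have := Matrix.rank_of_isUnit A hu
  rw [h] at this
  simp at this

lemma det_add_smul (A B : Matrix (Fin 3) (Fin 3) k) (t : k) :
    (A + t • B).det = A.det + t * (A.adjugate * B).trace + t ^ 2 * (B.adjugate * A).trace
      + t ^ 3 * B.det := by
  simp [Matrix.det_fin_three, Matrix.adjugate_fin_three, Matrix.trace_fin_three,
    Matrix.mul_apply, Fin.sum_univ_three, Matrix.add_apply, Matrix.smul_apply, smul_eq_mul,
    Matrix.vecMul, dotProduct]
  ring

lemma adjugate_add_smul (A B : Matrix (Fin 3) (Fin 3) k) (t : k) :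
    (A + t • B).adjugate = A.adjugate
      + t • ((A + B).adjugate - A.adjugate - B.adjugate) + (t * t) • B.adjugate := by
  ext i j
  fin_cases i <;> fin_cases j <;>
    simp [Matrix.adjugate_fin_three, Matrix.add_apply, Matrix.smul_apply, Matrix.sub_apply,
      smul_eq_mul] <;> ring

lemma trace_vecMulVec_mul (v : Fin 3 → k) (B : Matrix (Fin 3) (Fin 3) k) :
    (vecMulVec v v * B).trace = v ⬝ᵥ (B *ᵥ v) := by
  simp [Matrix.trace_fin_three, Matrix.mul_apply, Matrix.vecMulVec_apply, dotProduct,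
    Matrix.mulVec, Fin.sum_univ_three]
  ring


lemma rank_le_one_of_adjugate_eq_zero (A : Matrix (Fin 3) (Fin 3) k)
    (h : A.adjugate = 0) : A.rank ≤ 1 := by
  by_cases hA : A = 0
  · simp [hA]
  have H := h
  rw [Matrix.adjugate_fin_three] at H
  have q := fun i j => congrFun (congrFun H i) j
  have q00 := q 0 0
  have q01 := q 0 1
  have q02 := q 0 2
  have q10 := q 1 0
  have q11 := q 1 1
  have q12 := q 1 2
  have q20 := q 2 0
  have q21 := q 2 1
  have q22 := q 2 2
  simp only [Matrix.of_apply, Matrix.cons_val', Matrix.cons_val_zero, Matrix.cons_val_one,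
    Matrix.head_cons, Matrix.cons_val_two, Matrix.tail_cons, Matrix.empty_val',
    Matrix.cons_val_fin_one, Matrix.head_fin_const, Matrix.zero_apply]
    at q00 q01 q02 q10 q11 q12 q20 q21 q22
  -- all pairwise cross products of columns vanish
  have hcp : ∀ p q : Fin 3, cp (fun i => A i p) (fun i => A i q) = 0 := by
    intro p q
    funext r
    fin_cases p <;> fin_cases q <;> fin_cases r <;>
      simp only [cp, Matrix.cons_val_zero, Matrix.cons_val_one,
        Matrix.head_cons, Matrix.cons_val_two, Matrix.tail_cons, Pi.zero_apply,
        fin3_mk0, fin3_mk1, fin3_mk2] <;>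
      first
        | ring1
        | linear_combination q00 | linear_combination -q00
        | linear_combination q01 | linear_combination -q01
        | linear_combination q02 | linear_combination -q02
        | linear_combination q10 | linear_combination -q10
        | linear_combination q11 | linear_combination -q11
        | linear_combination q12 | linear_combination -q12
        | linear_combination q20 | linear_combination -q20
        | linear_combination q21 | linear_combination -q21
        | linear_combination q22 | linear_combination -q22
  -- get a nonzero column
  obtain ⟨i0, j0, hij⟩ : ∃ i j, A i j ≠ 0 := by
    by_contra hc; push_neg at hc; exact hA (by ext i j; simpa using hc i j)
  set c : Fin 3 → k := fun i => A i j0 with hc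
  have hcne : c ≠ 0 := fun h0 => hij (by have := congrFun h0 i0; simpa [hc] using this)
  choose t ht using fun q => cp_eq_zero hcne (hcp j0 q)
  have hAq : ∀ i q, A i q = t q * c i := fun i q => by
    have := congrFun (ht q) i; simpa using this
  have hrange : LinearMap.range A.mulVecLin ≤ Submodule.span k {c} := by
    rintro y ⟨x, rfl⟩
    have : A.mulVecLin x = (x 0 * t 0 + x 1 * t 1 + x 2 * t 2) • c := by
      funext i
      simp [Matrix.mulVecLin_apply, Matrix.mulVec, dotProduct, Fin.sum_univ_three, hAq]
      ring
    rw [this]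
    exact Submodule.smul_mem _ _ (Submodule.mem_span_singleton_self c)
  calc A.rank = Module.finrank k (LinearMap.range A.mulVecLin) := rfl
    _ ≤ Module.finrank k (Submodule.span k ({c} : Set (Fin 3 → k))) :=
        Submodule.finrank_mono hrange
    _ = 1 := finrank_span_singleton hcne


lemma adj_struct (C : Matrix (Fin 3) (Fin 3) k) (hs : Cᵀ = C) (hr : C.rank = 2)
    {v : Fin 3 → k} (hv : v ≠ 0) (hCv : C *ᵥ v = 0) :
    ∃ γ : k, γ ≠ 0 ∧ C.adjugate = γ • vecMulVec v v := by
  have hdet : C.det = 0 := det_eq_zero_of_rank_two C hr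
  -- kernel is the span of v
  have hker : LinearMap.ker C.mulVecLin = Submodule.span k {v} := by
    have hle : Submodule.span k {v} ≤ LinearMap.ker C.mulVecLin := by
      rw [Submodule.span_singleton_le_iff_mem]
      exact LinearMap.mem_ker.mpr (by simpa [Matrix.mulVecLin_apply] using hCv)
    refine (Submodule.eq_of_le_of_finrank_le hle ?_).symm
    have hrn := LinearMap.finrank_range_add_finrank_ker C.mulVecLin
    have h3 : Module.finrank k (Fin 3 → k) = 3 := by simp
    have hrk : Module.finrank k (LinearMap.range C.mulVecLin) = 2 := hr
    rw [h3, hrk] at hrn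
    rw [finrank_span_singleton hv]
    omega
  -- columns of the adjugate are in the kernel
  have h0 : C * C.adjugate = 0 := by rw [Matrix.mul_adjugate, hdet, zero_smul]
  have hcolmem : ∀ j, (fun i => C.adjugate i j) ∈ Submodule.span k ({v} : Set (Fin 3 → k)) := by
    intro j
    rw [← hker]
    refine LinearMap.mem_ker.mpr ?_
    funext i
    have := congrFun (congrFun h0 i) j
    simpa [Matrix.mulVecLin_apply, Matrix.mul_apply, Matrix.mulVec, dotProduct] using this
  choose g hg using fun j => Submodule.mem_span_singleton.mp (hcolmem j)
  have hadj : ∀ i j, C.adjugate i j = v i * g j := by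
    intro i j
    have := congrFun (hg j) i
    simp only [Pi.smul_apply, smul_eq_mul] at this
    rw [← this]; ring
  -- symmetry of the adjugate
  have hsadj : ∀ i j, C.adjugate i j = C.adjugate j i := by
    intro i j
    conv_rhs => rw [← hs]
    rw [← Matrix.adjugate_transpose]
    rfl
  obtain ⟨i0, hi0⟩ : ∃ i0, v i0 ≠ 0 := by
    by_contra hc; push_neg at hc; exact hv (funext fun i => hc i)
  set γ := g i0 / v i0 with hγdef
  have hgj : ∀ j, g j = γ * v j := by
    intro j
    have h1 : v i0 * g j = v j * g i0 := by rw [← hadj i0 j, hsadj i0 j, hadj j i0]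
    rw [hγdef, div_mul_eq_mul_div, eq_div_iff hi0]
    linear_combination h1
  have hne : C.adjugate ≠ 0 := by
    intro h
    have := rank_le_one_of_adjugate_eq_zero C h
    omega
  have hγ : γ ≠ 0 := by
    intro h0
    apply hne
    ext i j
    simp [hadj, hgj, h0]
  refine ⟨γ, hγ, ?_⟩
  ext i j
  simp only [Matrix.smul_apply, Matrix.vecMulVec_apply, smul_eq_mul, hadj, hgj]
  ring


lemma conj_vecMulVec (M : Matrix (Fin 3) (Fin 3) k) (x y : Fin 3 → k) :
    M * vecMulVec x y * Mᵀ = vecMulVec (M *ᵥ x) (M *ᵥ y) := by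
  ext i j
  simp [Matrix.mul_apply, Matrix.vecMulVec_apply, Matrix.mulVec, dotProduct,
    Fin.sum_univ_three, Matrix.transpose_apply]
  ring

lemma vecMulVec_mulVec' (x y z : Fin 3 → k) :
    vecMulVec x y *ᵥ z = (y ⬝ᵥ z) • x := by
  funext i
  simp [Matrix.vecMulVec_apply, Matrix.mulVec, dotProduct, Fin.sum_univ_three]
  ring

lemma cubic_coeff_one_eq_zero {c0 c1 c2 c3 : k} [CharZero k]
    (h : ∀ t : k, c0 + c1 * t + c2 * t ^ 2 + c3 * t ^ 3 = 0) : c1 = 0 := by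
  have h0 := h 0
  have h1 := h 1
  have hm1 := h (-1)
  have h2 := h 2
  have hc0 : c0 = 0 := by linear_combination h0
  have hc2 : c2 = 0 := by linear_combination (h1 + hm1) / 2 - h0
  have hc3 : c3 = 0 := by linear_combination (h2 - h0 - h1 + hm1) / 6 - (2/3 : k) * hc2
  linear_combination h1 - hc0 - hc2 - hc3

lemma tangent_rep (two_ne : (2 : k) ≠ 0) (C M : Matrix (Fin 3) (Fin 3) k)
    (w : Fin 3 → k) (δ : k) (hδ : δ ≠ 0) (hM : IsUnit M.det) (hCs : Cᵀ = C)
    (hMw : M *ᵥ w = ![0, 0, δ])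
    (h00 : (M * C * Mᵀ) 0 0 = 0) (h01 : (M * C * Mᵀ) 0 1 = 0)
    (h11 : (M * C * Mᵀ) 1 1 = 0) :
    ∃ u, C = vecMulVec w u + vecMulVec u w := by
  have hMT : IsUnit Mᵀ.det := by rwa [Matrix.det_transpose]
  set S := M * C * Mᵀ with hS
  have hSsym : ∀ i j, S i j = S j i := by
    intro i j
    have hT : Sᵀ = S := by
      rw [hS, Matrix.transpose_mul, Matrix.transpose_mul, Matrix.transpose_transpose, hCs,
        Matrix.mul_assoc]
    conv_lhs => rw [← hT]
    rfl
  refine ⟨M⁻¹ *ᵥ ![S 0 2 / δ, S 1 2 / δ, S 2 2 / (2 * δ)], ?_⟩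
  set s : Fin 3 → k := ![S 0 2 / δ, S 1 2 / δ, S 2 2 / (2 * δ)] with hsdef
  have hMu : M *ᵥ (M⁻¹ *ᵥ s) = s := by
    rw [Matrix.mulVec_mulVec, Matrix.mul_nonsing_inv _ hM, Matrix.one_mulVec]
  have key : M * (vecMulVec w (M⁻¹ *ᵥ s) + vecMulVec (M⁻¹ *ᵥ s) w) * Mᵀ = S := by
    rw [Matrix.mul_add, Matrix.add_mul, conj_vecMulVec, conj_vecMulVec, hMu, hMw]
    have hs0 : s 0 = S 0 2 / δ := rfl
    have hs1 : s 1 = S 1 2 / δ := rfl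
    have hs2 : s 2 = S 2 2 / (2 * δ) := rfl
    ext i j
    fin_cases i <;> fin_cases j <;>
      simp only [Matrix.add_apply, Matrix.vecMulVec_apply, Matrix.cons_val_zero,
        Matrix.cons_val_one, Matrix.head_cons, Matrix.cons_val_two, Matrix.tail_cons,
        fin3_mk0, fin3_mk1, fin3_mk2, hs0, hs1, hs2]
    · rw [h00]; ring
    · rw [h01]; ring
    · field_simp; ring
    · rw [hSsym 1 0, h01]; ring
    · rw [h11]; ring
    · field_simp; ring
    · rw [hSsym 2 0]; field_simp; ring
    · rw [hSsym 2 1]; field_simp; ring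
    · field_simp; ring
  have cancel : ∀ Y Z : Matrix (Fin 3) (Fin 3) k, M * Y * Mᵀ = M * Z * Mᵀ → Y = Z := by
    intro Y Z h
    have h2 := congrArg (fun W => M⁻¹ * W * (Mᵀ)⁻¹) h
    simpa [Matrix.mul_assoc, Matrix.nonsing_inv_mul_cancel_left _ _ hM,
      Matrix.mul_nonsing_inv_cancel_right _ _ hMT, ← Matrix.mul_assoc] using h2
  exact (cancel _ _ (key.trans hS)).symm


lemma det_rows (a b e : Fin 3 → k) : (Matrix.of ![a, b, e]).det = e ⬝ᵥ cp a b := by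
  simp [Matrix.det_fin_three, cp, dotProduct, Fin.sum_univ_three]
  ring

lemma conj_entry (M C : Matrix (Fin 3) (Fin 3) k) (i j : Fin 3) :
    (M * C * Mᵀ) i j = (M i) ⬝ᵥ (C *ᵥ (M j)) := by
  simp [Matrix.mul_apply, Matrix.mulVec, dotProduct, Fin.sum_univ_three,
    Matrix.transpose_apply]
  ring

lemma adjugate_smul_vecMulVec (c : k) (x : Fin 3 → k) :
    (c • vecMulVec x x).adjugate = 0 := by
  ext i j
  fin_cases i <;> fin_cases j <;>
    simp [Matrix.adjugate_fin_three, Matrix.vecMulVec_apply, Matrix.smul_apply,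
      smul_eq_mul] <;>
    ring


end VeroneseAux

open Matrix VeroneseAux

/-- Every non-secant line on the secant cubic of the Veronese surface lies in
a unique embedded tangent plane: if `L` is a 2-dimensional space of symmetric
3×3 matrices all of whose nonzero elements have rank exactly 2, then there is
a nonzero `w ∈ k³`, unique up to scalar, with `L ⊆ T_w`. -/
theorem nonsecant_line_in_unique_tangent_plane
    (k : Type*) [Field k] [IsAlgClosed k] [CharZero k]
    (L : Submodule k (Matrix (Fin 3) (Fin 3) k))
    (hdim : Module.finrank k L = 2)
    (hsymm : ∀ A ∈ L, A.IsSymm)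
    (hrank : ∀ A ∈ L, A ≠ 0 → A.rank = 2) :
    ∃ w : Fin 3 → k, w ≠ 0 ∧
      (∀ A ∈ L, ∃ u, A = Matrix.vecMulVec w u + Matrix.vecMulVec u w) ∧
      (∀ w' : Fin 3 → k, w' ≠ 0 →
        (∀ A ∈ L, ∃ u, A = Matrix.vecMulVec w' u + Matrix.vecMulVec u w') →
        ∃ c : k, w' = c • w) := by
  classical
  have two_ne : (2 : k) ≠ 0 := two_ne_zero
  -- symmetry in the transpose form
  have hsym' : ∀ C ∈ L, Cᵀ = C := fun C hC => hsymm C hC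
  -- a basis of L
  let bL : Module.Basis (Fin 2) k L := Module.finBasisOfFinrankEq k L hdim
  set A0 : Matrix (Fin 3) (Fin 3) k := ((bL 0 : L) : Matrix (Fin 3) (Fin 3) k) with hA0def
  set B0 : Matrix (Fin 3) (Fin 3) k := ((bL 1 : L) : Matrix (Fin 3) (Fin 3) k) with hB0def
  have hA0L : A0 ∈ L := (bL 0).2
  have hB0L : B0 ∈ L := (bL 1).2
  have hcomb : ∀ x y : k, x • A0 + y • B0 = 0 → x = 0 ∧ y = 0 := by
    intro x y hxy
    have hL : (x • bL 0 + y • bL 1 : L) = 0 := by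
      apply Subtype.ext
      rw [Submodule.coe_add, Submodule.coe_smul, Submodule.coe_smul, ZeroMemClass.coe_zero]
      exact hxy
    have hli := bL.linearIndependent
    rw [Fintype.linearIndependent_iff] at hli
    have hg := hli ![x, y] (by rw [Fin.sum_univ_two]; exact hL)
    exact ⟨hg 0, hg 1⟩
  have hspan : ∀ C ∈ L, ∃ x y : k, C = x • A0 + y • B0 := by
    intro C hC
    refine ⟨bL.repr ⟨C, hC⟩ 0, bL.repr ⟨C, hC⟩ 1, ?_⟩
    have := bL.sum_repr ⟨C, hC⟩
    rw [Fin.sum_univ_two] at this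
    have h2 := congrArg (Subtype.val) this
    rw [Submodule.coe_add, Submodule.coe_smul, Submodule.coe_smul] at h2
    exact h2.symm
  -- the key coefficient extraction
  have key : ∀ P Q : Matrix (Fin 3) (Fin 3) k, P ∈ L → Q ∈ L →
      (∀ t : k, P + t • Q ≠ 0) → (P.adjugate * Q).trace = 0 := by
    intro P Q hP hQ hne
    have hdet : ∀ t : k, (P + t • Q).det = 0 := fun t =>
      det_eq_zero_of_rank_two _ (hrank _ (L.add_mem hP (L.smul_mem t hQ)) (hne t))
    have h : ∀ t : k, P.det + (P.adjugate * Q).trace * t + (Q.adjugate * P).trace * t ^ 2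
        + Q.det * t ^ 3 = 0 := by
      intro t
      have h1 := det_add_smul P Q t
      rw [hdet t] at h1
      linear_combination -h1
    exact cubic_coeff_one_eq_zero h
  -- a kernel vector of A0
  have hA0ne : A0 ≠ 0 := fun h => one_ne_zero ((hcomb 1 0 (by simp [h])).1)
  have hdetA0 : A0.det = 0 := det_eq_zero_of_rank_two _ (hrank _ hA0L hA0ne)
  obtain ⟨a, hane, haker⟩ : ∃ v ≠ 0, A0 *ᵥ v = 0 :=
    (Matrix.exists_mulVec_eq_zero_iff).mpr hdetA0
  obtain ⟨γa, hγa, hadja⟩ := adj_struct A0 (hsym' _ hA0L) (hrank _ hA0L hA0ne) hane haker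
  -- rule out the common kernel case
  by_cases hall : ∀ C ∈ L, C *ᵥ a = 0
  · exfalso
    have hB0ne : B0 ≠ 0 := fun h => one_ne_zero ((hcomb 0 1 (by simp [h])).2)
    obtain ⟨γB, hγB, hadjB⟩ :=
      adj_struct B0 (hsym' _ hB0L) (hrank _ hB0L hB0ne) hane (hall B0 hB0L)
    obtain ⟨i0, hi0⟩ : ∃ i, a i ≠ 0 := by
      by_contra hc; push_neg at hc; exact hane (funext fun i => hc i)
    set c0 : k := A0.adjugate i0 i0 with hc0def
    set c1 : k := ((A0 + B0).adjugate - A0.adjugate - B0.adjugate) i0 i0 with hc1def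
    set c2 : k := B0.adjugate i0 i0 with hc2def
    have hc2 : c2 ≠ 0 := by
      rw [hc2def, hadjB]
      simp only [Matrix.smul_apply, Matrix.vecMulVec_apply, smul_eq_mul]
      exact mul_ne_zero hγB (mul_ne_zero hi0 hi0)
    have hnz : ∀ t : k, c0 + c1 * t + c2 * t ^ 2 ≠ 0 := by
      intro t
      have hmem : A0 + t • B0 ∈ L := L.add_mem hA0L (L.smul_mem t hB0L)
      have hne : A0 + t • B0 ≠ 0 := by
        intro h
        exact one_ne_zero ((hcomb 1 t (by simpa using h)).1)
      obtain ⟨γ, hγ, hadj⟩ :=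
        adj_struct _ (hsym' _ hmem) (hrank _ hmem hne) hane (hall _ hmem)
      have he := congrFun (congrFun (adjugate_add_smul A0 B0 t) i0) i0
      rw [hadj] at he
      simp only [Matrix.add_apply, Matrix.smul_apply, Matrix.sub_apply,
        Matrix.vecMulVec_apply, smul_eq_mul] at he
      intro h0
      apply mul_ne_zero hγ (mul_ne_zero hi0 hi0)
      rw [he]
      rw [hc0def, hc1def, hc2def] at h0
      simp only [Matrix.sub_apply, Matrix.add_apply] at h0
      linear_combination h0
    obtain ⟨z, hz⟩ := IsAlgClosed.exists_root
      (Polynomial.C c2 * Polynomial.X ^ 2 + Polynomial.C c1 * Polynomial.X + Polynomial.C c0)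
      (by rw [Polynomial.degree_quadratic hc2]; norm_num)
    apply hnz z
    have : c2 * z ^ 2 + c1 * z + c0 = 0 := by
      simpa [Polynomial.IsRoot] using hz
    linear_combination this
  · push_neg at hall
    obtain ⟨C0, hC0L, hC0a⟩ := hall
    have hC0ne : C0 ≠ 0 := fun h => hC0a (by simp [h])
    have hdetC0 : C0.det = 0 := det_eq_zero_of_rank_two _ (hrank _ hC0L hC0ne)
    obtain ⟨b, hbne, hbker⟩ : ∃ v ≠ 0, C0 *ᵥ v = 0 :=
      (Matrix.exists_mulVec_eq_zero_iff).mpr hdetC0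
    obtain ⟨γb, hγb, hadjb⟩ :=
      adj_struct C0 (hsym' _ hC0L) (hrank _ hC0L hC0ne) hbne hbker
    set w : Fin 3 → k := cp a b with hwdef
    have hwne : w ≠ 0 := by
      intro h
      obtain ⟨t, ht⟩ := cp_eq_zero hane h
      rw [ht] at hbker hbne
      rcases eq_or_ne t 0 with h0 | h0
      · exact hbne (by simp [h0])
      · apply hC0a
        have : C0 *ᵥ (t • a) = t • (C0 *ᵥ a) := Matrix.mulVec_smul C0 t a
        rw [this] at hbker
        have := congrArg (fun v => t⁻¹ • v) hbker
        simpa [smul_smul, inv_mul_cancel₀ h0] using this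
    obtain ⟨i0, hwi0⟩ : ∃ i, w i ≠ 0 := by
      by_contra hc; push_neg at hc; exact hwne (funext fun i => hc i)
    set e : Fin 3 → k := Pi.single i0 1 with hedef
    set δ : k := w i0 with hδdef
    have hew : e ⬝ᵥ w = δ := by
      simp [hedef, dotProduct, Pi.single_apply]; rfl
    -- spanning with A0 and C0
    obtain ⟨x0, y0, hxy0⟩ := hspan C0 hC0L
    have hy0 : y0 ≠ 0 := by
      intro h
      apply hC0a
      rw [hxy0, h]
      simp [Matrix.add_mulVec, Matrix.smul_mulVec, haker]
    have hspan' : ∀ C ∈ L, ∃ x y : k, C = x • A0 + y • C0 := by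
      intro C hC
      obtain ⟨x, y, hxy⟩ := hspan C hC
      refine ⟨x - y * x0 / y0, y / y0, ?_⟩
      rw [hxy, hxy0]
      ext i j
      simp only [Matrix.add_apply, Matrix.smul_apply, smul_eq_mul]
      field_simp
      ring
    -- nonvanishing of relevant pencils
    have hneAC : ∀ t : k, A0 + t • C0 ≠ 0 := by
      intro t h
      rw [hxy0] at h
      have h' : (1 + t * x0) • A0 + (t * y0) • B0 = 0 := by
        rw [← h]; ext i j
        simp only [Matrix.add_apply, Matrix.smul_apply, smul_eq_mul]; ring
      obtain ⟨h1, h2⟩ := hcomb _ _ h'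
      rcases mul_eq_zero.mp h2 with h3 | h3
      · rw [h3] at h1; simpa using h1
      · exact hy0 h3
    have hneCA : ∀ t : k, C0 + t • A0 ≠ 0 := by
      intro t h
      rw [hxy0] at h
      have h' : (x0 + t) • A0 + y0 • B0 = 0 := by
        rw [← h]; ext i j
        simp only [Matrix.add_apply, Matrix.smul_apply, smul_eq_mul]; ring
      exact hy0 (hcomb _ _ h').2
    -- the two quadratic-form identities
    have haBa : a ⬝ᵥ (C0 *ᵥ a) = 0 := by
      have htr := key A0 C0 hA0L hC0L hneAC
      rw [hadja, Matrix.smul_mul, Matrix.trace_smul, trace_vecMulVec_mul, smul_eq_mul] at htr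
      exact (mul_eq_zero.mp htr).resolve_left hγa
    have hbAb : b ⬝ᵥ (A0 *ᵥ b) = 0 := by
      have htr := key C0 A0 hC0L hA0L hneCA
      rw [hadjb, Matrix.smul_mul, Matrix.trace_smul, trace_vecMulVec_mul, smul_eq_mul] at htr
      exact (mul_eq_zero.mp htr).resolve_left hγb
    -- the congruence matrix
    set M : Matrix (Fin 3) (Fin 3) k := Matrix.of ![a, b, e] with hMdef
    have hM0 : M 0 = a := rfl
    have hM1 : M 1 = b := rfl
    have hM2 : M 2 = e := rfl
    have hdetM : M.det = δ := by rw [hMdef, det_rows, ← hwdef, hew]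
    have hMunit : IsUnit M.det := isUnit_iff_ne_zero.mpr (by rw [hdetM]; exact hwi0)
    have hMw : M *ᵥ w = ![0, 0, δ] := by
      funext i
      fin_cases i
      exacts [dot_cp_left a b, dot_cp_right a b, hew]
    refine ⟨w, hwne, ?_, ?_⟩
    · -- existence of the tangent representation
      intro C hC
      obtain ⟨x, y, hxy⟩ := hspan' C hC
      have hCa : C *ᵥ a = y • (C0 *ᵥ a) := by
        rw [hxy, Matrix.add_mulVec, Matrix.smul_mulVec, Matrix.smul_mulVec,
          haker, smul_zero, zero_add]
      have hCb : C *ᵥ b = x • (A0 *ᵥ b) := by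
        rw [hxy, Matrix.add_mulVec, Matrix.smul_mulVec, Matrix.smul_mulVec,
          hbker, smul_zero, add_zero]
      have h00 : (M * C * Mᵀ) 0 0 = 0 := by
        rw [conj_entry, hM0, hCa, dotProduct_smul, haBa, smul_zero]
      have h11 : (M * C * Mᵀ) 1 1 = 0 := by
        rw [conj_entry, hM1, hCb, dotProduct_smul, hbAb, smul_zero]
      have h01 : (M * C * Mᵀ) 0 1 = 0 := by
        rw [conj_entry, hM0, hM1, hCb, dotProduct_smul]
        have : a ⬝ᵥ (A0 *ᵥ b) = 0 := by
          rw [Matrix.dotProduct_mulVec]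
          have hva : a ᵥ* A0 = 0 := by
            rw [← hsym' _ hA0L, Matrix.vecMul_transpose, haker]
          rw [hva, zero_dotProduct]
        rw [this, smul_zero]
      exact tangent_rep two_ne C M w δ (by rw [hδdef]; exact hwi0) hMunit
        (hsym' _ hC) hMw h00 h01 h11
    · -- uniqueness
      intro w' hw' hrep
      have main : ∀ (P : Matrix (Fin 3) (Fin 3) k) (v : Fin 3 → k) (γ : k),
          P *ᵥ v = 0 → P.adjugate = γ • vecMulVec v v → γ ≠ 0 → v ≠ 0 →
          (∃ u, P = vecMulVec w' u + vecMulVec u w') → w' ⬝ᵥ v = 0 := by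
        intro P v γ hker hadj hγ hv ⟨u, hu⟩
        by_contra hcon
        have h0 : (u ⬝ᵥ v) • w' + (w' ⬝ᵥ v) • u = 0 := by
          rw [hu, Matrix.add_mulVec, vecMulVec_mulVec', vecMulVec_mulVec'] at hker
          exact hker
        obtain ⟨t, ht⟩ : ∃ t : k, u = t • w' := by
          refine ⟨-(u ⬝ᵥ v) / (w' ⬝ᵥ v), funext fun i => ?_⟩
          have hi := congrFun h0 i
          simp only [Pi.add_apply, Pi.smul_apply, smul_eq_mul, Pi.zero_apply] at hi
          simp only [Pi.smul_apply, smul_eq_mul]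
          rw [div_mul_eq_mul_div, eq_div_iff hcon]
          linear_combination hi
        have hPform : P = (2 * t) • vecMulVec w' w' := by
          rw [hu, ht]
          ext i j
          simp only [Matrix.add_apply, Matrix.vecMulVec_apply, Matrix.smul_apply,
            Pi.smul_apply, smul_eq_mul]
          ring
        have hadj0 : P.adjugate = 0 := by
          rw [hPform]; exact adjugate_smul_vecMulVec _ _
        rw [hadj] at hadj0
        obtain ⟨i1, hi1⟩ : ∃ i, v i ≠ 0 := by
          by_contra hc; push_neg at hc; exact hv (funext fun i => hc i)
        have := congrFun (congrFun hadj0 i1) i1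
        simp only [Matrix.smul_apply, Matrix.vecMulVec_apply, smul_eq_mul,
          Matrix.zero_apply] at this
        exact mul_ne_zero hγ (mul_ne_zero hi1 hi1) this
      have hw'a : w' ⬝ᵥ a = 0 := main A0 a γa haker hadja hγa hane (hrep A0 hA0L)
      have hw'b : w' ⬝ᵥ b = 0 := main C0 b γb hbker hadjb hγb hbne (hrep C0 hC0L)
      refine ⟨w' i0 / δ, ?_⟩
      have hd0 : a ⬝ᵥ (w' - (w' i0 / δ) • w) = 0 := by
        rw [dotProduct_sub, dotProduct_smul, dotProduct_comm a w', hw'a, hwdef, dot_cp_left]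
        simp
      have hd1 : b ⬝ᵥ (w' - (w' i0 / δ) • w) = 0 := by
        rw [dotProduct_sub, dotProduct_smul, dotProduct_comm b w', hw'b, hwdef, dot_cp_right]
        simp
      have hd2 : e ⬝ᵥ (w' - (w' i0 / δ) • w) = 0 := by
        rw [dotProduct_sub, dotProduct_smul, hew]
        have hew' : e ⬝ᵥ w' = w' i0 := by
          simp [hedef, dotProduct, Pi.single_apply]
        rw [hew']
        simp only [smul_eq_mul]
        field_simp
        ring
      have hd : M *ᵥ (w' - (w' i0 / δ) • w) = 0 := by
        funext i
        fin_cases i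
        exacts [hd0, hd1, hd2]
      have hzero : w' - (w' i0 / δ) • w = 0 := by
        have h1 : M⁻¹ *ᵥ (M *ᵥ (w' - (w' i0 / δ) • w)) = w' - (w' i0 / δ) • w := by
          rw [Matrix.mulVec_mulVec, Matrix.nonsing_inv_mul _ hMunit, Matrix.one_mulVec]
        rw [hd, Matrix.mulVec_zero] at h1
        exact h1.symm
      have := sub_eq_zero.mp hzero
      exact this
end

section
/- Let k be an algebraically closed field of characteristic zero, and let L be a 2-dimensional subspace of the space of symmetric 3×3 matrices over k such that every element of L is singular (det = 0). Then either L contains two linearly independent matrices of rank 1, or there exists a nonzero w ∈ k³ with L ⊆ T_w = {w uᵀ + u wᵀ : u ∈ k³}, and these two alternatives are mutually exclusive. (Set-theoretically, the Fano variety of lines of the secant cubic fourfold of the Veronese surface is the union of the family of secant lines of X and the family of lines lying in embedded tangent planes of X.) -/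
open Matrix

set_option linter.unusedSectionVars false
set_option maxHeartbeats 1000000

section Helpers

variable {k : Type*} [Field k] [IsAlgClosed k] [CharZero k]

private lemma vmv_mulVec (v w z : Fin 3 → k) :
    vecMulVec v w *ᵥ z = (w ⬝ᵥ z) • v := by
  funext i
  simp [vecMulVec, mulVec, dotProduct, Finset.mul_sum, Finset.sum_mul, mul_assoc, mul_comm, mul_left_comm]

private lemma smul_vmv (c : k) (v w : Fin 3 → k) :
    c • vecMulVec v w = vecMulVec (c • v) w := by
  ext i j; simp [vecMulVec, mul_assoc]

private lemma rank_vmv_le (v w : Fin 3 → k) : (vecMulVec v w).rank ≤ 1 := by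
  rw [vecMulVec_eq Unit]
  calc (replicateCol Unit v * replicateRow Unit w).rank ≤ (replicateCol Unit v).rank := rank_mul_le_left _ _
    _ ≤ 1 := by simpa using rank_le_card_width (replicateCol Unit v)

private lemma rank_pos_of_ne_zero {M : Matrix (Fin 3) (Fin 3) k} (h : M ≠ 0) : 1 ≤ M.rank := by
  by_contra hr
  push_neg at hr
  interval_cases hM : M.rank
  · apply h
    have : LinearMap.range M.mulVecLin = ⊥ := by
      have := Submodule.finrank_eq_zero (R := k) (S := LinearMap.range M.mulVecLin)
      exact this.mp hM
    ext i j
    have : M.mulVecLin (Pi.single j 1) = 0 := by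
      have : M.mulVecLin (Pi.single j 1) ∈ (⊥ : Submodule k (Fin 3 → k)) := this ▸ LinearMap.mem_range_self _ _
      simpa using this
    have := congrFun this i
    simpa [Matrix.mulVecLin, Matrix.mulVec_single] using this

private lemma rank1_smul_vmv {c : k} {v : Fin 3 → k} (hc : c ≠ 0) (hv : v ≠ 0) :
    (c • vecMulVec v v).rank = 1 := by
  refine le_antisymm ?_ (rank_pos_of_ne_zero ?_)
  · rw [smul_vmv]; exact rank_vmv_le _ _
  · obtain ⟨i, hi⟩ := Function.ne_iff.mp hv
    intro h
    have h2 : c * (v i * v i) = 0 := by simpa [vecMulVec] using congrFun (congrFun h i) i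
    rcases mul_eq_zero.mp h2 with h2 | h2
    · exact hc h2
    · rcases mul_eq_zero.mp h2 with h2 | h2 <;> simp at hi <;> exact hi h2

private lemma two_le_rank_of_cols {M : Matrix (Fin 3) (Fin 3) k} {x y : Fin 3 → k}
    (h : LinearIndependent k ![M *ᵥ x, M *ᵥ y]) : 2 ≤ M.rank := by
  have hle : Submodule.span k (Set.range ![M *ᵥ x, M *ᵥ y]) ≤ LinearMap.range M.mulVecLin := by
    rw [Submodule.span_le]
    rintro z ⟨i, rfl⟩
    fin_cases i
    · exact ⟨x, rfl⟩
    · exact ⟨y, rfl⟩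
  have h2 := finrank_span_eq_card h
  simp at h2
  calc (2:ℕ) = Module.finrank k (Submodule.span k (Set.range ![M *ᵥ x, M *ᵥ y])) := h2.symm
    _ ≤ Module.finrank k (LinearMap.range M.mulVecLin) := Submodule.finrank_mono hle
    _ = M.rank := rfl

private lemma parallel_of_minors {w u : Fin 3 → k} (hw : w ≠ 0)
    (h : ∀ p q, u p * w q = u q * w p) : ∃ c : k, u = c • w := by
  obtain ⟨i, hi⟩ := Function.ne_iff.mp hw
  simp at hi
  refine ⟨u i / w i, funext fun j => ?_⟩
  have := h j i
  rw [Pi.smul_apply, smul_eq_mul]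
  field_simp
  linear_combination this

private lemma dual_vec {x y : Fin 3 → k} {p q : Fin 3}
    (h : x p * y q - x q * y p ≠ 0) : ∃ z, x ⬝ᵥ z = 1 ∧ y ⬝ᵥ z = 0 := by
  set m := x p * y q - x q * y p
  have hpq : p ≠ q := by rintro rfl; simp [m] at h
  refine ⟨(fun j => (if j = p then y q / m else 0) - (if j = q then y p / m else 0) : Fin 3 → k), ?_, ?_⟩ <;>
  · simp [dotProduct, Pi.single_apply, mul_sub, Finset.sum_sub_distrib, Finset.sum_ite_eq', mul_comm]
    field_simp
    try ring

private lemma two_le_rank_tangent {w u : Fin 3 → k} {p q : Fin 3}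
    (h : u p * w q ≠ u q * w p) :
    2 ≤ (vecMulVec w u + vecMulVec u w).rank := by
  set M := vecMulVec w u + vecMulVec u w with hM
  apply two_le_rank_of_cols (x := Pi.single p 1) (y := Pi.single q 1)
  have hcol : ∀ r : Fin 3, M *ᵥ Pi.single r 1 = u r • w + w r • u := by
    intro r
    rw [hM, add_mulVec, vmv_mulVec, vmv_mulVec]
    simp [dotProduct, Pi.single_apply, Finset.sum_ite_eq', mul_comm]
  rw [LinearIndependent.pair_iff]
  intro α β hab
  rw [hcol, hcol] at hab
  have key : ∀ i, (α * u p + β * u q) * w i + (α * w p + β * w q) * u i = 0 := by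
    intro i
    have := congrFun hab i
    simp at this
    linear_combination this
  set s := α * u p + β * u q with hs
  set t := α * w p + β * w q with ht
  have e1 := key p
  have e2 := key q
  have hs0 : s = 0 := by
    have : s * (w p * u q - w q * u p) = 0 := by linear_combination u q * e1 - u p * e2
    rcases mul_eq_zero.mp this with h' | h'
    · exact h'
    · exact absurd (by linear_combination -h') h
  have ht0 : t = 0 := by
    have : t * (u p * w q - u q * w p) = 0 := by linear_combination w q * e1 - w p * e2
    rcases mul_eq_zero.mp this with h' | h'
    · exact h'
    · exact absurd (by linear_combination h') h
  constructor
  · have : α * (u p * w q - u q * w p) = 0 := by linear_combination w q * hs0 - u q * ht0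
    rcases mul_eq_zero.mp this with h' | h'
    · exact h'
    · exact absurd (by linear_combination h') h
  · have : β * (u q * w p - u p * w q) = 0 := by linear_combination w p * hs0 - u p * ht0
    rcases mul_eq_zero.mp this with h' | h'
    · exact h'
    · exact absurd (by linear_combination -h') h

private lemma tangent_rank_one {w u : Fin 3 → k} (hw : w ≠ 0)
    (hr : (vecMulVec w u + vecMulVec u w).rank = 1) :
    ∃ c : k, vecMulVec w u + vecMulVec u w = c • vecMulVec w w := by
  by_cases hmin : ∀ p q, u p * w q = u q * w p
  · obtain ⟨c, rfl⟩ := parallel_of_minors hw hmin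
    refine ⟨2 * c, ?_⟩
    ext i j
    simp [vecMulVec]
    ring
  · push_neg at hmin
    obtain ⟨p, q, h⟩ := hmin
    have := two_le_rank_tangent h
    omega

private lemma exists_basis_pair (L : Submodule k (Matrix (Fin 3) (Fin 3) k))
    (hdim : Module.finrank k L = 2) {A : Matrix (Fin 3) (Fin 3) k}
    (hA : A ∈ L) (hA0 : A ≠ 0) :
    ∃ B ∈ L, LinearIndependent k ![A, B] ∧ ∀ M ∈ L, ∃ x y : k, M = x • A + y • B := by
  have hBex : ∃ B ∈ L, B ∉ Submodule.span k {A} := by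
    by_contra hcon
    push_neg at hcon
    have hle : L ≤ Submodule.span k {A} := hcon
    have := Submodule.finrank_mono (R := k) hle
    rw [hdim, finrank_span_singleton hA0] at this
    omega
  obtain ⟨B, hB, hBs⟩ := hBex
  have hind : LinearIndependent k ![A, B] := by
    rw [LinearIndependent.pair_iff]
    intro s t hst
    have ht : t = 0 := by
      by_contra ht
      apply hBs
      have htB : t • B = -(s • A) := by
        rw [add_comm] at hst
        exact eq_neg_of_add_eq_zero_left hst
      have : B = (-(t⁻¹ * s)) • A := by
        rw [← inv_smul_smul₀ ht B, htB, smul_neg, smul_smul, ← neg_smul]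
      rw [this]
      exact Submodule.smul_mem _ _ (Submodule.mem_span_singleton_self A)
    rw [ht] at hst
    simp at hst
    rcases hst with h | h
    exacts [⟨h, ht⟩, absurd h hA0]
  have hspan : Submodule.span k {A, B} = L := by
    apply Submodule.eq_of_le_of_finrank_le
    · rw [Submodule.span_le]
      rintro x (rfl | rfl)
      exacts [hA, by simpa using hB]
    · rw [hdim]
      have := finrank_span_eq_card hind
      simp at this
      rw [show Set.range ![A, B] = ({A, B} : Set _) by simp [Set.pair_comm]] at this
      omega
  refine ⟨B, hB, hind, fun M hM => ?_⟩
  rw [← hspan] at hM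
  obtain ⟨x, y, hxy⟩ := Submodule.mem_span_pair.mp hM
  exact ⟨x, y, hxy.symm⟩

private lemma exists_nonR1 (L : Submodule k (Matrix (Fin 3) (Fin 3) k))
    (hdim : Module.finrank k L = 2) :
    ∃ M ∈ L, M ≠ 0 ∧ ¬∃ (c : k) (v : Fin 3 → k), M = c • vecMulVec v v := by
  by_contra hcon
  push_neg at hcon
  -- every nonzero element of L is c • v vᵀ
  have hR1 : ∀ M ∈ L, M ≠ 0 → ∃ v : Fin 3 → k, v ≠ 0 ∧ M = vecMulVec v v := by
    intro M hM hM0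
    obtain ⟨c, v, hcv⟩ := hcon M hM hM0
    have hc : c ≠ 0 := by rintro rfl; simp at hcv; exact hM0 hcv
    have hv : v ≠ 0 := by rintro rfl; simp [vecMulVec] at hcv; exact hM0 (by ext i j; simp [hcv])
    obtain ⟨s, hs⟩ := IsAlgClosed.exists_pow_nat_eq c (n := 2) (by norm_num)
    have hs0 : s ≠ 0 := by rintro rfl; simp at hs; exact hc hs.symm
    refine ⟨s • v, fun h => hv ?_, ?_⟩
    · ext i; have := congrFun h i; simp at this
      rcases this with h | h
      exacts [absurd h hs0, h]
    · rw [hcv]; ext i j; simp [vecMulVec]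
      linear_combination (v i * v j) * hs.symm
  obtain ⟨A, hA, hA0⟩ := Submodule.exists_mem_ne_zero_of_ne_bot (p := L) (by
    intro h
    rw [h] at hdim
    simp at hdim)
  obtain ⟨x, hx0, hAx⟩ := hR1 A hA hA0
  obtain ⟨B, hB, hind, -⟩ := exists_basis_pair L hdim hA hA0
  have pair := LinearIndependent.pair_iff.mp hind
  have hB0 : B ≠ 0 := by
    rintro rfl
    have := pair 0 1 (by simp)
    simp at this
  obtain ⟨y, hy0, hBy⟩ := hR1 B hB hB0
  have hAB0 : A + B ≠ 0 := by
    intro h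
    have := pair 1 1 (by simpa using h)
    simp at this
  obtain ⟨c₃, z, hABz⟩ := hcon (A + B) (L.add_mem hA hB) hAB0
  have hpq : ∃ p q, y p * x q ≠ y q * x p := by
    by_contra hc
    push_neg at hc
    obtain ⟨c, rfl⟩ := parallel_of_minors hx0 hc
    have := pair (c^2) (-1) (by
      rw [hAx, hBy]
      ext i j
      simp [vecMulVec]
      ring)
    simp at this
  obtain ⟨p, q, hminor⟩ := hpq
  obtain ⟨z₁, hxz₁, hyz₁⟩ := dual_vec (x := x) (y := y) (p := q) (q := p)
    (by intro h; exact hminor (by linear_combination h))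
  obtain ⟨z₂, hyz₂, hxz₂⟩ := dual_vec (x := y) (y := x) (p := p) (q := q)
    (by intro h; exact hminor (by linear_combination h))
  have key : ∀ zz : Fin 3 → k, (A + B) *ᵥ zz = ((x ⬝ᵥ zz) • x + (y ⬝ᵥ zz) • y) := by
    intro zz
    rw [hAx, hBy, add_mulVec, vmv_mulVec, vmv_mulVec]
  have hx' : x = ((z ⬝ᵥ z₁) * c₃) • z := by
    have h1 := key z₁
    rw [hABz, smul_vmv, vmv_mulVec, hxz₁, hyz₁] at h1
    simpa [smul_smul, mul_comm] using h1.symm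
  have hy' : y = ((z ⬝ᵥ z₂) * c₃) • z := by
    have h2 := key z₂
    rw [hABz, smul_vmv, vmv_mulVec, hxz₂, hyz₂] at h2
    simpa [smul_smul, mul_comm] using h2.symm
  apply hminor
  rw [hx', hy']
  simp
  ring

private def E3 (k : Type*) [Field k] : Matrix (Fin 3) (Fin 3) k := !![1,0,0; 0,1,0; 0,0,0]

private lemma block_rank1 {α β γ : k} (h : α * γ = β * β) (hne : ¬(α = 0 ∧ β = 0 ∧ γ = 0)) :
    ∃ (c₀ : k) (v : Fin 3 → k), c₀ ≠ 0 ∧ v ≠ 0 ∧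
      (!![α,β,0;β,γ,0;0,0,0] : Matrix (Fin 3) (Fin 3) k) = c₀ • vecMulVec v v := by
  by_cases hα : α = 0
  · have hβ : β = 0 := mul_self_eq_zero.mp (by rw [← h, hα, zero_mul])
    have hγ : γ ≠ 0 := fun hγ => hne ⟨hα, hβ, hγ⟩
    refine ⟨γ⁻¹, ![0, γ, 0], inv_ne_zero hγ, fun hv => hγ (by simpa using congrFun hv 1), ?_⟩
    have e1 : γ⁻¹ * (γ * γ) = γ := by field_simp
    ext i j
    fin_cases i <;> fin_cases j <;> simp [vecMulVec, hα, hβ, e1, vecHead, vecTail]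
  · have e0 : α⁻¹ * (α * α) = α := by field_simp
    have e1 : α⁻¹ * (α * β) = β := by field_simp
    have e2 : α⁻¹ * (β * α) = β := by field_simp
    have e3 : α⁻¹ * (β * β) = γ := by field_simp; linear_combination -h
    refine ⟨α⁻¹, ![α, β, 0], inv_ne_zero hα, fun hv => hα (by simpa using congrFun hv 0), ?_⟩
    ext i j
    fin_cases i <;> fin_cases j <;> simp [vecMulVec, e0, e1, e2, e3, vecHead, vecTail]

private lemma diag_normalize {M : Matrix (Fin 3) (Fin 3) k} (hsy : M.IsSymm) (hdt : M.det = 0)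
    (hnr1 : ¬∃ (c : k) (v : Fin 3 → k), M = c • vecMulVec v v) :
    ∃ P : Matrix (Fin 3) (Fin 3) k, IsUnit P.det ∧ Pᵀ * M * P = E3 k := by
  have hM0 : M ≠ 0 := by rintro rfl; exact hnr1 ⟨0, 0, by simp⟩
  have hsd : ∀ a b : Fin 3 → k, (M *ᵥ a) ⬝ᵥ b = a ⬝ᵥ (M *ᵥ b) := by
    intro a b
    rw [dotProduct_mulVec, ← mulVec_transpose, hsy.eq, dotProduct_comm]
  have hpol : ∀ u v : Fin 3 → k,
      (u + v) ⬝ᵥ (M *ᵥ (u + v)) = u ⬝ᵥ (M *ᵥ u) + v ⬝ᵥ (M *ᵥ v) + 2 * (u ⬝ᵥ (M *ᵥ v)) := by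
    intro u v
    rw [mulVec_add, dotProduct_add, add_dotProduct, add_dotProduct]
    rw [show (v ⬝ᵥ (M *ᵥ u)) = u ⬝ᵥ (M *ᵥ v) by rw [← hsd, dotProduct_comm]]
    ring
  -- entry extraction
  have hentryM : ∀ i j, (Pi.single i 1 : Fin 3 → k) ⬝ᵥ (M *ᵥ Pi.single j 1) = M i j := by
    intro i j
    simp [mulVec, dotProduct, Pi.single_apply, Finset.sum_ite_eq', Finset.mul_sum]
  -- step a : a vector of nonzero square norm
  have hx : ∃ x, x ⬝ᵥ (M *ᵥ x) ≠ 0 := by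
    by_contra hc
    push_neg at hc
    have hzero : ∀ u v : Fin 3 → k, u ⬝ᵥ (M *ᵥ v) = 0 := by
      intro u v
      have := hpol u v
      rw [hc, hc, hc] at this
      have h2 : (2:k) * (u ⬝ᵥ (M *ᵥ v)) = 0 := by linear_combination -this
      exact (mul_eq_zero.mp h2).resolve_left two_ne_zero
    apply hM0
    ext i j
    rw [← hentryM i j, hzero]
    simp
  obtain ⟨x, hqx⟩ := hx
  obtain ⟨s, hs⟩ := IsAlgClosed.exists_pow_nat_eq (x ⬝ᵥ (M *ᵥ x)) (n := 2) (by norm_num)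
  have hs0 : s ≠ 0 := by rintro rfl; rw [← hs] at hqx; simp at hqx
  set x' : Fin 3 → k := s⁻¹ • x with hx'def
  have hqx' : x' ⬝ᵥ (M *ᵥ x') = 1 := by
    rw [hx'def, mulVec_smul, smul_dotProduct, dotProduct_smul, smul_eq_mul, smul_eq_mul, ← hs]
    field_simp
  set w₀ : Fin 3 → k := M *ᵥ x' with hw₀def
  have hw₀x' : w₀ ⬝ᵥ x' = 1 := by rw [hw₀def, hsd, hqx']
  -- step c : second vector
  have hy : ∃ y, w₀ ⬝ᵥ y = 0 ∧ y ⬝ᵥ (M *ᵥ y) ≠ 0 := by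
    by_contra hc
    push_neg at hc
    have hWpol : ∀ y z : Fin 3 → k, w₀ ⬝ᵥ y = 0 → w₀ ⬝ᵥ z = 0 → y ⬝ᵥ (M *ᵥ z) = 0 := by
      intro y z hy hz
      have hyz : w₀ ⬝ᵥ (y + z) = 0 := by rw [dotProduct_add, hy, hz, add_zero]
      have := hpol y z
      rw [hc y hy, hc z hz, hc (y+z) hyz] at this
      have h2 : (2:k) * (y ⬝ᵥ (M *ᵥ z)) = 0 := by linear_combination -this
      exact (mul_eq_zero.mp h2).resolve_left two_ne_zero
    have hMy : ∀ y, w₀ ⬝ᵥ y = 0 → M *ᵥ y = 0 := by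
      intro y hy
      funext i
      have hdec : (Pi.single i 1 : Fin 3 → k) = (w₀ i) • x' + (Pi.single i 1 - (w₀ i) • x') := by abel
      have hzi : w₀ ⬝ᵥ (Pi.single i 1 - (w₀ i) • x') = 0 := by
        rw [dotProduct_sub, dotProduct_smul, hw₀x']
        simp [dotProduct, Pi.single_apply, Finset.sum_ite_eq']
      have : (M *ᵥ y) ⬝ᵥ (Pi.single i 1 : Fin 3 → k) = 0 := by
        rw [hdec, dotProduct_add, dotProduct_smul, hsd y, ← hw₀def]
        rw [show y ⬝ᵥ w₀ = 0 by rw [dotProduct_comm]; exact hy]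
        rw [hsd, hWpol y _ hy hzi]
        simp
      simpa [dotProduct, Pi.single_apply, Finset.sum_ite_eq'] using this
    apply hnr1
    refine ⟨1, w₀, ?_⟩
    rw [one_smul]
    ext i j
    rw [← hentryM i j]
    have hdec : (Pi.single j 1 : Fin 3 → k) = (w₀ j) • x' + (Pi.single j 1 - (w₀ j) • x') := by abel
    have hzj : w₀ ⬝ᵥ (Pi.single j 1 - (w₀ j) • x') = 0 := by
      rw [dotProduct_sub, dotProduct_smul, hw₀x']
      simp [dotProduct, Pi.single_apply, Finset.sum_ite_eq']
    rw [hdec, mulVec_add, mulVec_smul, dotProduct_add, dotProduct_smul, ← hw₀def]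
    rw [hMy _ hzj]
    simp [vecMulVec]
    ring
  obtain ⟨y, hw₀y, hqy⟩ := hy
  obtain ⟨t, ht⟩ := IsAlgClosed.exists_pow_nat_eq (y ⬝ᵥ (M *ᵥ y)) (n := 2) (by norm_num)
  have ht0 : t ≠ 0 := by rintro rfl; rw [← ht] at hqy; simp at hqy
  set y' : Fin 3 → k := t⁻¹ • y with hy'def
  have hqy' : y' ⬝ᵥ (M *ᵥ y') = 1 := by
    rw [hy'def, mulVec_smul, smul_dotProduct, dotProduct_smul, smul_eq_mul, smul_eq_mul, ← ht]
    field_simp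
  have hw₀y' : w₀ ⬝ᵥ y' = 0 := by rw [hy'def, dotProduct_smul, hw₀y, smul_zero]
  -- step e : kernel vector
  obtain ⟨r, hr0, hMr⟩ := Matrix.exists_mulVec_eq_zero_iff.mpr hdt
  set c : Fin 3 → (Fin 3 → k) := ![x', y', r] with hcdef
  set P : Matrix (Fin 3) (Fin 3) k := Matrix.of (fun i j => c j i) with hPdef
  have hentry : ∀ i j, (Pᵀ * M * P) i j = (c i) ⬝ᵥ (M *ᵥ (c j)) := by
    intro i j
    simp only [mul_apply, transpose_apply, hPdef, Matrix.of_apply, dotProduct, mulVec,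
      Finset.sum_mul, Finset.mul_sum]
    rw [Finset.sum_comm]
    apply Finset.sum_congr rfl
    intro m _
    apply Finset.sum_congr rfl
    intro l _
    ring
  have hMx'y' : x' ⬝ᵥ (M *ᵥ y') = 0 := by rw [← hsd, ← hw₀def]; exact hw₀y'
  have hMy'x' : y' ⬝ᵥ (M *ᵥ x') = 0 := by rw [← hw₀def, dotProduct_comm]; exact hw₀y'
  refine ⟨P, ?_, ?_⟩
  · rw [isUnit_iff_ne_zero]
    intro hdP
    obtain ⟨v, hv0, hPv⟩ := Matrix.exists_mulVec_eq_zero_iff.mpr hdP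
    have hcomb : (v 0) • x' + (v 1) • y' + (v 2) • r = 0 := by
      funext i
      have := congrFun hPv i
      simp only [mulVec, dotProduct, Fin.sum_univ_three, hPdef, Matrix.of_apply, hcdef] at this
      simpa [mul_comm] using this
    have hv0' : v 0 = 0 := by
      have := congrArg (fun z => w₀ ⬝ᵥ z) hcomb
      simp only [dotProduct_add, dotProduct_smul, dotProduct_zero, smul_eq_mul] at this
      rw [hw₀x', hw₀y'] at this
      rw [show w₀ ⬝ᵥ r = 0 by rw [hw₀def, hsd, hMr, dotProduct_zero]] at this
      simpa using this
    have hv1' : v 1 = 0 := by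
      have h1 : (M *ᵥ y') ⬝ᵥ x' = 0 := by rw [hsd, ← hw₀def, dotProduct_comm]; exact hw₀y'
      have h2 : (M *ᵥ y') ⬝ᵥ y' = 1 := by rw [hsd]; exact hqy'
      have h3 : (M *ᵥ y') ⬝ᵥ r = 0 := by rw [hsd, hMr, dotProduct_zero]
      have := congrArg (fun z => (M *ᵥ y') ⬝ᵥ z) hcomb
      simp only [dotProduct_add, dotProduct_smul, dotProduct_zero, smul_eq_mul] at this
      rw [h1, h2, h3] at this
      simpa using this
    have hv2' : v 2 = 0 := by
      rw [hv0', hv1'] at hcomb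
      simp only [zero_smul, zero_add] at hcomb
      rcases smul_eq_zero.mp hcomb with h | h
      exacts [h, absurd h hr0]
    exact hv0 (funext fun i => by fin_cases i <;> simpa using (by assumption : _ = (0:k)))
  · ext i j
    rw [hentry]
    have h20 : (c 2) ⬝ᵥ (M *ᵥ (c 0)) = 0 := by
      rw [hcdef]
      show r ⬝ᵥ (M *ᵥ x') = 0
      rw [← hsd, hMr, zero_dotProduct]
    have h21 : (c 2) ⬝ᵥ (M *ᵥ (c 1)) = 0 := by
      rw [hcdef]
      show r ⬝ᵥ (M *ᵥ y') = 0
      rw [← hsd, hMr, zero_dotProduct]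
    have h22 : (c 2) ⬝ᵥ (M *ᵥ (c 2)) = 0 := by
      rw [hcdef]
      show r ⬝ᵥ (M *ᵥ r) = 0
      rw [hMr, dotProduct_zero]
    fin_cases i <;> fin_cases j
    · simpa [hcdef, E3] using hqx'
    · simpa [hcdef, E3] using hMx'y'
    · simpa [hcdef, E3] using (by rw [hMr, dotProduct_zero] : x' ⬝ᵥ (M *ᵥ r) = 0)
    · simpa [hcdef, E3] using hMy'x'
    · simpa [hcdef, E3] using hqy'
    · simpa [hcdef, E3] using (by rw [hMr, dotProduct_zero] : y' ⬝ᵥ (M *ᵥ r) = 0)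
    · simpa [E3] using h20
    · simpa [E3] using h21
    · simpa [E3] using h22

private lemma congr_vmv (Q : Matrix (Fin 3) (Fin 3) k) (a b : Fin 3 → k) :
    Q * vecMulVec a b * Qᵀ = vecMulVec (Q *ᵥ a) (Q *ᵥ b) := by
  ext i j
  simp only [mul_apply, vecMulVec_apply, transpose_apply, mulVec, dotProduct,
    Finset.sum_mul, Finset.mul_sum]
  apply Finset.sum_congr rfl
  intro m _
  apply Finset.sum_congr rfl
  intro l _
  ring

private noncomputable def congrE (P : Matrix (Fin 3) (Fin 3) k) (hP : IsUnit P.det) :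
    Matrix (Fin 3) (Fin 3) k ≃ₗ[k] Matrix (Fin 3) (Fin 3) k where
  toFun := fun M => Pᵀ * M * P
  map_add' := fun M N => by simp [Matrix.mul_add, Matrix.add_mul]
  map_smul' := fun c M => by simp [Matrix.mul_smul, Matrix.smul_mul]
  invFun := fun M => P⁻¹ᵀ * M * P⁻¹
  left_inv := fun M => by
    have h1 : P * P⁻¹ = 1 := Matrix.mul_nonsing_inv P hP
    have h2 : P⁻¹ᵀ * Pᵀ = 1 := by rw [← Matrix.transpose_mul, h1, Matrix.transpose_one]
    calc P⁻¹ᵀ * (Pᵀ * M * P) * P⁻¹ = (P⁻¹ᵀ * Pᵀ) * M * (P * P⁻¹) := by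
          simp only [Matrix.mul_assoc]
      _ = M := by rw [h1, h2, Matrix.one_mul, Matrix.mul_one]
  right_inv := fun M => by
    have h1 : P⁻¹ * P = 1 := Matrix.nonsing_inv_mul P hP
    have h2 : Pᵀ * P⁻¹ᵀ = 1 := by rw [← Matrix.transpose_mul, h1, Matrix.transpose_one]
    calc Pᵀ * (P⁻¹ᵀ * M * P⁻¹) * P = (Pᵀ * P⁻¹ᵀ) * M * (P⁻¹ * P) := by
          simp only [Matrix.mul_assoc]
      _ = M := by rw [h1, h2, Matrix.one_mul, Matrix.mul_one]

private lemma main_normalized (L : Submodule k (Matrix (Fin 3) (Fin 3) k))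
    (hdim : Module.finrank k L = 2)
    (hsymm : ∀ A ∈ L, A.IsSymm)
    (hdet : ∀ A ∈ L, A.det = 0)
    (hE : E3 k ∈ L) :
    (∃ A B : Matrix (Fin 3) (Fin 3) k, A ∈ L ∧ B ∈ L ∧ A.rank = 1 ∧ B.rank = 1 ∧
      LinearIndependent k ![A, B]) ∨
    (∃ w : Fin 3 → k, w ≠ 0 ∧ ∀ A ∈ L, ∃ u, A = vecMulVec w u + vecMulVec u w) := by
  have hE0 : E3 k ≠ 0 := fun h => (one_ne_zero (α := k)) (by simpa [E3] using congrFun (congrFun h 0) 0)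
  obtain ⟨B, hB, hind, hrep⟩ := exists_basis_pair L hdim hE hE0
  have pair := LinearIndependent.pair_iff.mp hind
  have hsB := (hsymm B hB).eq
  have h10 : B 1 0 = B 0 1 := by conv_lhs => rw [← hsB, transpose_apply]
  have h20 : B 2 0 = B 0 2 := by conv_lhs => rw [← hsB, transpose_apply]
  have h21 : B 2 1 = B 1 2 := by conv_lhs => rw [← hsB, transpose_apply]
  set aa := B 0 0 with haa
  set bb := B 0 1 with hbb
  set cc := B 1 1 with hcc
  set dd := B 0 2 with hdd
  set ee := B 1 2 with hee
  set ff := B 2 2 with hff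
  have hd0 : aa * cc * ff - aa * ee * ee - bb * bb * ff + bb * ee * dd + dd * bb * ee - dd * cc * dd = 0 := by
    have := hdet B hB
    rw [det_fin_three, h10, h20, h21] at this
    linear_combination this
  have hd1 : (1 + aa) * (1 + cc) * ff - (1 + aa) * ee * ee - bb * bb * ff + bb * ee * dd
      + dd * bb * ee - dd * (1 + cc) * dd = 0 := by
    have := hdet (E3 k + B) (L.add_mem hE hB)
    rw [det_fin_three] at this
    simp only [Matrix.add_apply] at this
    simp only [E3, Matrix.cons_val', Matrix.cons_val_zero, Matrix.cons_val_one, Matrix.head_cons,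
      Matrix.empty_val', Matrix.cons_val_fin_one, Matrix.head_fin_const, Matrix.cons_val_two,
      Matrix.tail_cons, Matrix.of_apply] at this
    rw [h10, h20, h21] at this
    linear_combination this
  have hd2 : (-1 + aa) * (-1 + cc) * ff - (-1 + aa) * ee * ee - bb * bb * ff + bb * ee * dd
      + dd * bb * ee - dd * (-1 + cc) * dd = 0 := by
    have := hdet (B - E3 k) (L.sub_mem hB hE)
    rw [det_fin_three] at this
    simp only [Matrix.sub_apply] at this
    simp only [E3, Matrix.cons_val', Matrix.cons_val_zero, Matrix.cons_val_one, Matrix.head_cons,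
      Matrix.empty_val', Matrix.cons_val_fin_one, Matrix.head_fin_const, Matrix.cons_val_two,
      Matrix.tail_cons, Matrix.of_apply] at this
    rw [h10, h20, h21] at this
    linear_combination this
  have hf : ff = 0 := by linear_combination (hd1 + hd2) / 2 - hd0
  have hde : dd * dd + ee * ee = 0 := by linear_combination (hd2 - hd1) / 2 + (aa + cc) * hf
  have hq : aa * ee * ee - 2 * bb * dd * ee + cc * dd * dd = 0 := by
    linear_combination -hd0 + (aa * cc - bb * bb) * hf
  -- unified tangent-plane construction
  have tangent : ∀ j : k, j * j = -1 → 2 * bb = j * (aa - cc) → ee = j * dd →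
      ∃ w : Fin 3 → k, w ≠ 0 ∧ ∀ A ∈ L, ∃ u, A = vecMulVec w u + vecMulVec u w := by
    intro j hj2 hbj he
    refine ⟨![1, j, 0], fun h => one_ne_zero (α := k) (by simpa using congrFun h 0),
      fun A hA => ?_⟩
    obtain ⟨x, y, hxy⟩ := hrep A hA
    refine ⟨![x/2 + y*aa/2, -(x + y*cc)*j/2, y*dd], ?_⟩
    rw [hxy]
    ext i j'
    fin_cases i <;> fin_cases j' <;>
      simp [E3, vecMulVec, Matrix.add_apply, Matrix.smul_apply, h10, h20, h21,
        ← haa, ← hbb, ← hcc, ← hdd, ← hee, ← hff, vecHead, vecTail]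
    all_goals try ring1
    all_goals try linear_combination (y/2) * hbj
    all_goals try linear_combination (x + y*cc) * hj2
    all_goals try exact Or.inr hf
    all_goals try linear_combination y * he
    all_goals try linear_combination y * hf
  by_cases hD : dd = 0
  · -- the pencil is contained in the 2x2 upper block
    have he0 : ee = 0 := mul_self_eq_zero.mp (by linear_combination hde - dd * hD)
    by_cases hΔ : (aa - cc)^2 + 4*bb^2 = 0
    · -- double root : tangent case
      right
      by_cases ha' : aa - cc = 0
      · exfalso
        have hb0 : bb = 0 := by
          have h4 : (2*bb)*(2*bb) = 0 := by linear_combination hΔ - (aa - cc) * ha'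
          have h2 := mul_self_eq_zero.mp h4
          rcases mul_eq_zero.mp h2 with h | h
          · exact absurd h two_ne_zero
          · exact h
        have hz : (-aa) • E3 k + (1:k) • B = 0 := by
          ext i j'
          fin_cases i <;> fin_cases j' <;>
            simp [E3, Matrix.add_apply, Matrix.smul_apply, h10, h20, h21,
              ← haa, ← hbb, ← hcc, ← hdd, ← hee, ← hff, hb0, hD, he0, hf, vecHead, vecTail]
          all_goals linear_combination -ha'
        exact one_ne_zero (pair (-aa) 1 hz).2
      · -- j = 2b/(a-c)
        apply tangent (2*bb/(aa - cc))
        · field_simp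
          linear_combination hΔ
        · field_simp
        · rw [hD, mul_zero]
          exact he0
    · -- two distinct roots : secant case
      left
      obtain ⟨s, hs⟩ := IsAlgClosed.exists_pow_nat_eq ((aa - cc)^2 + 4*bb^2) (n := 2) (by norm_num)
      have hs0 : s ≠ 0 := fun h => hΔ (by rw [← hs, h]; ring)
      have hM : ∀ t : k, (aa + t) * (cc + t) - bb * bb = 0 → (t • E3 k + B).rank = 1 := by
        intro t ht
        have hBt : t • E3 k + B = !![aa + t, bb, 0; bb, cc + t, 0; 0, 0, 0] := by
          ext i j'
          fin_cases i <;> fin_cases j' <;>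
            simp [E3, Matrix.add_apply, Matrix.smul_apply, h10, h20, h21,
              ← haa, ← hbb, ← hcc, ← hdd, ← hee, ← hff, hD, he0, hf, vecHead, vecTail]
          all_goals try ring1
        have hne : ¬(aa + t = 0 ∧ bb = 0 ∧ cc + t = 0) := by
          rintro ⟨h1, h2, h3⟩
          have hz : t • E3 k + (1:k) • B = 0 := by
            rw [one_smul, hBt]
            ext i j'
            fin_cases i <;> fin_cases j' <;> simp [h1, h2, h3, vecHead, vecTail]
          exact one_ne_zero (pair t 1 hz).2
        obtain ⟨c₀, v, hc₀, hv, hble⟩ := block_rank1 (by linear_combination ht) hne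
        rw [hBt, hble]
        exact rank1_smul_vmv hc₀ hv
      set t₁ := (-(aa+cc) + s)/2 with ht₁
      set t₂ := (-(aa+cc) - s)/2 with ht₂
      have hr1 : (aa + t₁) * (cc + t₁) - bb*bb = 0 := by rw [ht₁]; linear_combination hs/4
      have hr2 : (aa + t₂) * (cc + t₂) - bb*bb = 0 := by rw [ht₂]; linear_combination hs/4
      refine ⟨t₁ • E3 k + B, t₂ • E3 k + B, L.add_mem (L.smul_mem t₁ hE) hB,
        L.add_mem (L.smul_mem t₂ hE) hB, hM t₁ hr1, hM t₂ hr2, ?_⟩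
      rw [LinearIndependent.pair_iff]
      intro α β hαβ
      have hcomb : (α*t₁ + β*t₂) • E3 k + (α + β) • B = 0 := by rw [← hαβ]; module
      obtain ⟨hA1, hA2⟩ := pair _ _ hcomb
      have hα0 : α = 0 := by
        have hts : α * s = 0 := by rw [ht₁, ht₂] at hA1; linear_combination hA1 - ((-(aa+cc) - s)/2)*hA2
        rcases mul_eq_zero.mp hts with h | h
        · exact h
        · exact absurd h hs0
      exact ⟨hα0, by linear_combination hA2 - hα0⟩
  · -- dd ≠ 0 : tangent case with j = ee/dd
    right
    apply tangent (ee/dd)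
    · rw [div_mul_div_comm, div_eq_iff (mul_ne_zero hD hD)]
      linear_combination hde
    · have hkey1 : dd * (cc*dd - aa*dd - 2*bb*ee) = 0 := by linear_combination hq - aa * hde
      have h2' : cc*dd - aa*dd - 2*bb*ee = 0 :=
        (mul_eq_zero.mp hkey1).resolve_left hD
      have hkey2 : dd * (2*bb*dd - ee*(aa - cc)) = 0 := by
        linear_combination ee * h2' + 2 * bb * hde
      have h2 : 2*bb*dd - ee*(aa-cc) = 0 :=
        (mul_eq_zero.mp hkey2).resolve_left hD
      rw [div_mul_eq_mul_div, eq_div_iff hD]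
      linear_combination h2
    · exact (div_mul_cancel₀ ee hD).symm
end Helpers

/-- Lines on the secant cubic fourfold of the Veronese surface: a
2-dimensional space `L` of singular symmetric 3×3 matrices either contains
two linearly independent rank-1 matrices (a secant line) or lies in an
embedded tangent plane `T_w` of the Veronese surface, and exactly one of the
two alternatives occurs. -/
theorem lines_on_secant_cubic_veronese_dichotomy
    (k : Type*) [Field k] [IsAlgClosed k] [CharZero k]
    (L : Submodule k (Matrix (Fin 3) (Fin 3) k))
    (hdim : Module.finrank k L = 2)
    (hsymm : ∀ A ∈ L, A.IsSymm)
    (hdet : ∀ A ∈ L, A.det = 0) :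
    Xor'
      (∃ A B : Matrix (Fin 3) (Fin 3) k, A ∈ L ∧ B ∈ L ∧
        A.rank = 1 ∧ B.rank = 1 ∧ LinearIndependent k ![A, B])
      (∃ w : Fin 3 → k, w ≠ 0 ∧
        ∀ A ∈ L, ∃ u, A = Matrix.vecMulVec w u + Matrix.vecMulVec u w) := by
  have hor : (∃ A B : Matrix (Fin 3) (Fin 3) k, A ∈ L ∧ B ∈ L ∧
        A.rank = 1 ∧ B.rank = 1 ∧ LinearIndependent k ![A, B]) ∨
      (∃ w : Fin 3 → k, w ≠ 0 ∧
        ∀ A ∈ L, ∃ u, A = Matrix.vecMulVec w u + Matrix.vecMulVec u w) := by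
    obtain ⟨M, hM, hM0, hnr1⟩ := exists_nonR1 L hdim
    obtain ⟨P, hP, hPMP⟩ := diag_normalize (hsymm M hM) (hdet M hM) hnr1
    set e := congrE P hP with he
    set L' := L.map (e : Matrix (Fin 3) (Fin 3) k →ₗ[k] Matrix (Fin 3) (Fin 3) k) with hL'
    have hdim' : Module.finrank k L' = 2 := by
      rw [hL', LinearEquiv.finrank_map_eq]
      exact hdim
    have hsymm' : ∀ A ∈ L', A.IsSymm := by
      rintro A' ⟨A, hA, rfl⟩
      show (Pᵀ * A * P)ᵀ = Pᵀ * A * P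
      rw [Matrix.transpose_mul, Matrix.transpose_mul, Matrix.transpose_transpose,
        (hsymm A hA).eq, Matrix.mul_assoc]
    have hdet' : ∀ A ∈ L', A.det = 0 := by
      rintro A' ⟨A, hA, rfl⟩
      show (Pᵀ * A * P).det = 0
      rw [Matrix.det_mul, Matrix.det_mul, hdet A hA]
      ring
    have hE' : E3 k ∈ L' := ⟨M, hM, hPMP⟩
    rcases main_normalized L' hdim' hsymm' hdet' hE' with
      ⟨A', B', hA', hB', hrA, hrB, hindAB⟩ | ⟨w', hw', htan⟩
    · left
      obtain ⟨A, hA, hAe⟩ := hA'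
      obtain ⟨B, hB, hBe⟩ := hB'
      have hrank : ∀ C : Matrix (Fin 3) (Fin 3) k, (Pᵀ * C * P).rank = C.rank := by
        intro C
        rw [rank_mul_eq_left_of_isUnit_det P (Pᵀ * C) hP,
          rank_mul_eq_right_of_isUnit_det Pᵀ C (by rwa [Matrix.det_transpose])]
      refine ⟨A, B, hA, hB, ?_, ?_, ?_⟩
      · rw [← hAe] at hrA
        rw [← hrank A]
        exact hrA
      · rw [← hBe] at hrB
        rw [← hrank B]
        exact hrB
      · have hker : LinearMap.ker (e.symm : Matrix (Fin 3) (Fin 3) k →ₗ[k] Matrix (Fin 3) (Fin 3) k) = ⊥ :=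
          LinearMap.ker_eq_bot.mpr e.symm.injective
        have hli := hindAB.map' (e.symm : Matrix (Fin 3) (Fin 3) k →ₗ[k] Matrix (Fin 3) (Fin 3) k) hker
        have hfun : (⇑(e.symm : Matrix (Fin 3) (Fin 3) k →ₗ[k] Matrix (Fin 3) (Fin 3) k) ∘ ![A', B']) = ![A, B] := by
          funext i
          fin_cases i
          · simp only [Function.comp_apply, Matrix.cons_val_zero]
            rw [← hAe]
            exact e.symm_apply_apply A
          · simp only [Function.comp_apply, Matrix.cons_val_one, Matrix.head_cons]
            rw [← hBe]
            exact e.symm_apply_apply B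
        rwa [hfun] at hli
    · right
      refine ⟨P⁻¹ᵀ *ᵥ w', ?_, ?_⟩
      · intro h0
        apply hw'
        have hrec : Pᵀ *ᵥ (P⁻¹ᵀ *ᵥ w') = w' := by
          rw [Matrix.mulVec_mulVec, ← Matrix.transpose_mul, Matrix.nonsing_inv_mul P hP,
            Matrix.transpose_one, Matrix.one_mulVec]
        rw [h0, Matrix.mulVec_zero] at hrec
        exact hrec.symm
      · intro A hA
        obtain ⟨u', hu'⟩ := htan ((e : Matrix (Fin 3) (Fin 3) k →ₗ[k] Matrix (Fin 3) (Fin 3) k) A)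
          (Submodule.mem_map_of_mem hA)
        refine ⟨P⁻¹ᵀ *ᵥ u', ?_⟩
        have hback : P⁻¹ᵀ * (Pᵀ * A * P) * P⁻¹ = A := (congrE P hP).left_inv A
        have hu'' : Pᵀ * A * P = vecMulVec w' u' + vecMulVec u' w' := hu'
        rw [hu''] at hback
        have e1 : P⁻¹ᵀ * vecMulVec w' u' * P⁻¹ = vecMulVec (P⁻¹ᵀ *ᵥ w') (P⁻¹ᵀ *ᵥ u') := by
          have := congr_vmv (P⁻¹ᵀ) w' u'
          rwa [Matrix.transpose_transpose] at this
        have e2 : P⁻¹ᵀ * vecMulVec u' w' * P⁻¹ = vecMulVec (P⁻¹ᵀ *ᵥ u') (P⁻¹ᵀ *ᵥ w') := by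
          have := congr_vmv (P⁻¹ᵀ) u' w'
          rwa [Matrix.transpose_transpose] at this
        rw [Matrix.mul_add, Matrix.add_mul, e1, e2] at hback
        exact hback.symm
  have hnand : ¬((∃ A B : Matrix (Fin 3) (Fin 3) k, A ∈ L ∧ B ∈ L ∧
        A.rank = 1 ∧ B.rank = 1 ∧ LinearIndependent k ![A, B]) ∧
      (∃ w : Fin 3 → k, w ≠ 0 ∧
        ∀ A ∈ L, ∃ u, A = Matrix.vecMulVec w u + Matrix.vecMulVec u w)) := by
    rintro ⟨⟨A, B, hA, hB, hrA, hrB, hind⟩, ⟨w, hw0, htan⟩⟩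
    obtain ⟨uA, hAeq⟩ := htan A hA
    obtain ⟨uB, hBeq⟩ := htan B hB
    rw [hAeq] at hrA
    rw [hBeq] at hrB
    obtain ⟨cA, hcA⟩ := tangent_rank_one hw0 hrA
    obtain ⟨cB, hcB⟩ := tangent_rank_one hw0 hrB
    have hcA0 : cA ≠ 0 := by
      rintro rfl
      rw [zero_smul] at hcA
      rw [hcA] at hrA
      simp [Matrix.rank_zero] at hrA
    have hz : cB • A + (-cA) • B = 0 := by
      rw [hAeq, hBeq, hcA, hcB, smul_smul, smul_smul, ← add_smul,
        show cB * cA + -cA * cB = 0 by ring, zero_smul]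
    have := (LinearIndependent.pair_iff.mp hind) cB (-cA) hz
    exact hcA0 (neg_eq_zero.mp this.2)
  rcases hor with h | h
  · exact Or.inl ⟨h, fun h2 => hnand ⟨h, h2⟩⟩
  · exact Or.inr ⟨h, fun h2 => hnand ⟨h2, h⟩⟩
end

section
/- Let k be an algebraically closed field of characteristic zero, let v ∈ k³ be nonzero, and let L be a 2-dimensional subspace of the space of symmetric 3×3 matrices over k such that every element of L is singular, v vᵀ ∈ L, and every rank-1 element of L is a scalar multiple of v vᵀ. Then L ⊆ T_v = {v uᵀ + u vᵀ : u ∈ k³}. (A line on the secant cubic of the Veronese surface meeting the Veronese surface X in exactly one point is tangent to X at that point; there are no lines meeting X transversally in a single point.) -/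
open Matrix

section Aux

variable {k : Type*} [Field k]

/-- Congruence transforms of rank-one matrices. -/
lemma congr_vecMulVec (g : Matrix (Fin 3) (Fin 3) k) (x y : Fin 3 → k) :
    g * Matrix.vecMulVec x y * gᵀ = Matrix.vecMulVec (g *ᵥ x) (g *ᵥ y) := by
  ext i j
  simp [Matrix.mul_apply, Matrix.vecMulVec_apply, Matrix.mulVec, dotProduct,
    Fin.sum_univ_three]
  ring

lemma rank_vmv_self (x : Fin 3 → k) (hx : x ≠ 0) :
    (Matrix.vecMulVec x x).rank = 1 := by
  obtain ⟨i, hi⟩ := Function.ne_iff.mp hx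
  have hxi : x i ≠ 0 := by simpa using hi
  have hr : LinearMap.range (Matrix.vecMulVec x x).mulVecLin = Submodule.span k {x} := by
    apply le_antisymm
    · rintro _ ⟨w, rfl⟩
      have hw : (Matrix.vecMulVec x x).mulVecLin w = (x ⬝ᵥ w) • x := by
        ext r
        simp [Matrix.mulVecLin_apply, Matrix.mulVec, Matrix.vecMulVec_apply,
          dotProduct, Fin.sum_univ_three]
        ring
      rw [hw]
      exact Submodule.smul_mem _ _ (Submodule.mem_span_singleton_self x)
    · rw [Submodule.span_le, Set.singleton_subset_iff]
      refine ⟨Pi.single i (x i)⁻¹, ?_⟩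
      rw [Matrix.mulVecLin_apply, Matrix.mulVec_single]
      ext r
      simp [Matrix.vecMulVec_apply, mul_assoc, hxi]
  rw [Matrix.rank, hr, finrank_span_singleton hx]

lemma exists_unit_matrix (v : Fin 3 → k) (hv : v ≠ 0) :
    ∃ N : Matrix (Fin 3) (Fin 3) k, IsUnit N.det ∧
      N *ᵥ (Pi.single 0 1 : Fin 3 → k) = v := by
  obtain ⟨i, hi⟩ := Function.ne_iff.mp hv
  fin_cases i
  · refine ⟨!![v 0, 0, 0; v 1, 1, 0; v 2, 0, 1], ?_, ?_⟩
    · have hd : (!![v 0, 0, 0; v 1, 1, 0; v 2, 0, 1] : Matrix (Fin 3) (Fin 3) k).det = v 0 := by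
        rw [Matrix.det_fin_three]
        simp
      rw [hd]
      exact isUnit_iff_ne_zero.mpr (by simpa using hi)
    · ext r
      fin_cases r <;> simp [Matrix.mulVec, dotProduct, Fin.sum_univ_three,
        Pi.single_apply]
  · refine ⟨!![v 0, 1, 0; v 1, 0, 0; v 2, 0, 1], ?_, ?_⟩
    · have hd : (!![v 0, 1, 0; v 1, 0, 0; v 2, 0, 1] : Matrix (Fin 3) (Fin 3) k).det = -v 1 := by
        rw [Matrix.det_fin_three]
        simp
      rw [hd]
      exact isUnit_iff_ne_zero.mpr (neg_ne_zero.mpr (by simpa using hi))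
    · ext r
      fin_cases r <;> simp [Matrix.mulVec, dotProduct, Fin.sum_univ_three,
        Pi.single_apply]
  · refine ⟨!![v 0, 1, 0; v 1, 0, 1; v 2, 0, 0], ?_, ?_⟩
    · have hd : (!![v 0, 1, 0; v 1, 0, 1; v 2, 0, 0] : Matrix (Fin 3) (Fin 3) k).det = v 2 := by
        rw [Matrix.det_fin_three]
        simp
      rw [hd]
      exact isUnit_iff_ne_zero.mpr (by simpa using hi)
    · ext r
      fin_cases r <;> simp [Matrix.mulVec, dotProduct, Fin.sum_univ_three,
        Pi.single_apply]

end Aux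

section Core

variable {k : Type*} [Field k] [CharZero k]

/-- The core case of the theorem, with `v` the first standard basis vector. -/
lemma core_case
    (L : Submodule k (Matrix (Fin 3) (Fin 3) k))
    (hsymm : ∀ A ∈ L, A.IsSymm)
    (hdet : ∀ A ∈ L, A.det = 0)
    (hvL : Matrix.vecMulVec (Pi.single 0 1 : Fin 3 → k) (Pi.single 0 1) ∈ L)
    (hrk1 : ∀ A ∈ L, A.rank = 1 →
      ∃ c : k, A = c • Matrix.vecMulVec (Pi.single 0 1 : Fin 3 → k) (Pi.single 0 1)) :
    ∀ A ∈ L, ∃ u, A = Matrix.vecMulVec (Pi.single 0 1 : Fin 3 → k) u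
      + Matrix.vecMulVec u (Pi.single 0 1) := by
  intro A hA
  have hS := hsymm A hA
  have h10 : A 1 0 = A 0 1 := congrFun (congrFun hS 0) 1
  have h20 : A 2 0 = A 0 2 := congrFun (congrFun hS 0) 2
  have h21 : A 2 1 = A 1 2 := congrFun (congrFun hS 1) 2
  have hdA : A.det = 0 := hdet A hA
  rw [Matrix.det_fin_three] at hdA
  simp only [h10, h20, h21] at hdA
  have hPA : (Matrix.vecMulVec (Pi.single 0 1 : Fin 3 → k) (Pi.single 0 1) + A).det = 0 :=
    hdet _ (L.add_mem hvL hA)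
  rw [Matrix.det_fin_three] at hPA
  simp [Matrix.vecMulVec_apply, Pi.single_apply] at hPA
  simp only [h10, h20, h21] at hPA
  -- the lower-right 2×2 block is singular
  have hC : A 1 1 * A 2 2 - A 1 2 * A 1 2 = 0 := by
    first
    | (linear_combination hPA - hdA)
    | (linear_combination hPA + hdA)
    | (linear_combination -hPA + hdA)
    | (linear_combination -hPA - hdA)
  -- Step 1 : A 1 1 = 0
  have h11 : A 1 1 = 0 := by
    by_contra h11
    have hk : A 0 1 * A 1 2 = A 0 2 * A 1 1 := by
      have sq : (A 0 1 * A 1 2 - A 0 2 * A 1 1) ^ 2 = 0 := by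
        first
        | (linear_combination (-(A 1 1)) * hdA + (A 0 0 * A 1 1 - A 0 1 * A 0 1) * hC)
        | (linear_combination (A 1 1) * hdA + (A 0 0 * A 1 1 - A 0 1 * A 0 1) * hC)
      have h0 := pow_eq_zero_iff (two_ne_zero) |>.mp sq
      linear_combination h0
    have hxx : ((A 0 1 ^ 2 - A 0 0 * A 1 1) •
          Matrix.vecMulVec (Pi.single 0 1 : Fin 3 → k) (Pi.single 0 1) + A 1 1 • A)
        = Matrix.vecMulVec ![A 0 1, A 1 1, A 1 2] ![A 0 1, A 1 1, A 1 2] := by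
      ext i j
      fin_cases i <;> fin_cases j <;>
        simp [Matrix.vecMulVec_apply, Pi.single_apply, h10, h20, h21]
      all_goals first
        | ring1
        | (linear_combination hk)
        | (linear_combination -hk)
        | (linear_combination hC)
        | (linear_combination -hC)
    have hy : (![A 0 1, A 1 1, A 1 2] : Fin 3 → k) ≠ 0 :=
      fun h => h11 (by simpa using congrFun h 1)
    have hmem : Matrix.vecMulVec ![A 0 1, A 1 1, A 1 2] ![A 0 1, A 1 1, A 1 2] ∈ L := by
      rw [← hxx]
      exact L.add_mem (L.smul_mem _ hvL) (L.smul_mem _ hA)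
    obtain ⟨c, hc⟩ := hrk1 _ hmem (rank_vmv_self _ hy)
    have h1 := congrFun (congrFun hc 1) 1
    simp [Matrix.vecMulVec_apply, Pi.single_apply] at h1
    exact h11 h1
  -- Step 2 : A 2 2 = 0
  have h22 : A 2 2 = 0 := by
    by_contra h22
    have hk : A 0 2 * A 1 2 = A 0 1 * A 2 2 := by
      have sq : (A 0 2 * A 1 2 - A 0 1 * A 2 2) ^ 2 = 0 := by
        first
        | (linear_combination (-(A 2 2)) * hdA + (A 0 0 * A 2 2 - A 0 2 * A 0 2) * hC)
        | (linear_combination (A 2 2) * hdA + (A 0 0 * A 2 2 - A 0 2 * A 0 2) * hC)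
      have h0 := pow_eq_zero_iff (two_ne_zero) |>.mp sq
      linear_combination h0
    have hxx : ((A 0 2 ^ 2 - A 0 0 * A 2 2) •
          Matrix.vecMulVec (Pi.single 0 1 : Fin 3 → k) (Pi.single 0 1) + A 2 2 • A)
        = Matrix.vecMulVec ![A 0 2, A 1 2, A 2 2] ![A 0 2, A 1 2, A 2 2] := by
      ext i j
      fin_cases i <;> fin_cases j <;>
        simp [Matrix.vecMulVec_apply, Pi.single_apply, h10, h20, h21]
      all_goals first
        | ring1
        | (linear_combination hk)
        | (linear_combination -hk)
        | (linear_combination hC)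
        | (linear_combination -hC)
    have hy : (![A 0 2, A 1 2, A 2 2] : Fin 3 → k) ≠ 0 :=
      fun h => h22 (by simpa using congrFun h 2)
    have hmem : Matrix.vecMulVec ![A 0 2, A 1 2, A 2 2] ![A 0 2, A 1 2, A 2 2] ∈ L := by
      rw [← hxx]
      exact L.add_mem (L.smul_mem _ hvL) (L.smul_mem _ hA)
    obtain ⟨c, hc⟩ := hrk1 _ hmem (rank_vmv_self _ hy)
    have h1 := congrFun (congrFun hc 2) 2
    simp [Matrix.vecMulVec_apply, Pi.single_apply] at h1
    exact h22 h1
  -- Step 3 : A 1 2 = 0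
  have h12 : A 1 2 = 0 := by
    have sq : A 1 2 ^ 2 = 0 := by linear_combination -hC + A 2 2 * h11
    exact pow_eq_zero_iff two_ne_zero |>.mp sq
  -- conclusion
  refine ⟨![A 0 0 / 2, A 0 1, A 0 2], ?_⟩
  ext i j
  fin_cases i <;> fin_cases j <;>
    simp [Matrix.vecMulVec_apply, Pi.single_apply, h10, h20, h21, h11, h22, h12,
      -Matrix.vecMulVec_cons, -Matrix.cons_vecMulVec]
  all_goals first
    | rfl
    | exact (add_halves _).symm
    | (simp [Matrix.vecHead, Matrix.vecTail])
    | (field_simp)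
    | ring1

end Core

/-- A line on the secant cubic of the Veronese surface meeting the Veronese
surface in exactly one point is tangent to it at that point: if `L` is a
2-dimensional space of singular symmetric 3×3 matrices containing `v vᵀ` and
whose rank-1 elements are all scalar multiples of `v vᵀ`, then `L ⊆ T_v`. -/
theorem line_meeting_veronese_once_is_tangent
    (k : Type*) [Field k] [IsAlgClosed k] [CharZero k]
    (v : Fin 3 → k) (hv : v ≠ 0)
    (L : Submodule k (Matrix (Fin 3) (Fin 3) k))
    (hdim : Module.finrank k L = 2)
    (hsymm : ∀ A ∈ L, A.IsSymm)
    (hdet : ∀ A ∈ L, A.det = 0)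
    (hvL : Matrix.vecMulVec v v ∈ L)
    (hrk1 : ∀ A ∈ L, A.rank = 1 → ∃ c : k, A = c • Matrix.vecMulVec v v) :
    ∀ A ∈ L, ∃ u, A = Matrix.vecMulVec v u + Matrix.vecMulVec u v := by
  obtain ⟨N, hN, hNv⟩ := exists_unit_matrix v hv
  set h := N⁻¹ with hh
  have hhd : IsUnit h.det := N.isUnit_nonsing_inv_det hN
  have hNh : N * h = 1 := Matrix.mul_nonsing_inv N hN
  have hhN : h * N = 1 := Matrix.nonsing_inv_mul N hN
  have hve : h *ᵥ v = (Pi.single 0 1 : Fin 3 → k) := by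
    rw [← hNv, Matrix.mulVec_mulVec, hhN, Matrix.one_mulVec]
  let φ : Matrix (Fin 3) (Fin 3) k →ₗ[k] Matrix (Fin 3) (Fin 3) k :=
    { toFun := fun A => h * A * hᵀ
      map_add' := fun A B => by noncomm_ring
      map_smul' := fun c A => by simp [Matrix.mul_smul, Matrix.smul_mul] }
  have hφ : ∀ A, φ A = h * A * hᵀ := fun _ => rfl
  set L' := L.map φ with hL'
  have hmem' : ∀ A ∈ L, φ A ∈ L' := fun A hA => Submodule.mem_map_of_mem hA
  have hsymm' : ∀ B ∈ L', B.IsSymm := by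
    rintro _ ⟨A, hA, rfl⟩
    show (h * A * hᵀ)ᵀ = h * A * hᵀ
    rw [Matrix.transpose_mul, Matrix.transpose_mul, Matrix.transpose_transpose,
      (hsymm A hA).eq, ← Matrix.mul_assoc]
  have hdet' : ∀ B ∈ L', B.det = 0 := by
    rintro _ ⟨A, hA, rfl⟩
    show (h * A * hᵀ).det = 0
    rw [Matrix.det_mul, Matrix.det_mul, hdet A hA]
    ring
  have hvL' : Matrix.vecMulVec (Pi.single 0 1 : Fin 3 → k) (Pi.single 0 1) ∈ L' := by
    have heq : φ (Matrix.vecMulVec v v)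
        = Matrix.vecMulVec (Pi.single 0 1 : Fin 3 → k) (Pi.single 0 1) := by
      rw [hφ, congr_vecMulVec, hve]
    exact heq ▸ hmem' _ hvL
  have hrk1' : ∀ B ∈ L', B.rank = 1 →
      ∃ c : k, B = c • Matrix.vecMulVec (Pi.single 0 1 : Fin 3 → k) (Pi.single 0 1) := by
    rintro _ ⟨A, hA, rfl⟩ hrk
    rw [hφ, Matrix.rank_mul_eq_left_of_isUnit_det hᵀ (h * A)
      (by rwa [Matrix.det_transpose]),
      Matrix.rank_mul_eq_right_of_isUnit_det h A hhd] at hrk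
    obtain ⟨c, hc⟩ := hrk1 A hA hrk
    exact ⟨c, by rw [hφ, hc, Matrix.mul_smul, Matrix.smul_mul, congr_vecMulVec, hve]⟩
  intro A hA
  obtain ⟨u, hu⟩ := core_case L' hsymm' hdet' hvL' hrk1' (φ A) (hmem' A hA)
  rw [hφ] at hu
  refine ⟨N *ᵥ u, ?_⟩
  have hA' : A = N * (h * A * hᵀ) * Nᵀ := by
    have h2 : hᵀ * Nᵀ = 1 := by rw [← Matrix.transpose_mul, hNh, Matrix.transpose_one]
    calc A = (N * h) * A * (hᵀ * Nᵀ) := by rw [hNh, h2, Matrix.one_mul, Matrix.mul_one]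
    _ = N * (h * A * hᵀ) * Nᵀ := by noncomm_ring
  rw [hA', hu, Matrix.mul_add, Matrix.add_mul, congr_vecMulVec, congr_vecMulVec, hNv]
end

section
/- Let k be a field of characteristic zero. There exists a 2-dimensional subspace L of the space of 3×3 matrices over k such that every nonzero element of L has rank exactly 2, and such that for all nonzero a, b ∈ k³ the subspace L is not contained in T_{a,b} = {a uᵀ + v bᵀ : u, v ∈ k³}. (On the secant cubic of the Segre fourfold there exist non-secant lines, the lines of type II, which are not contained in any embedded tangent space of the Segre fourfold; for example L may be taken to be spanned by diag(1,1,0) and E₁₂ + E₃₁.) -/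
open Matrix

private lemma rank_aux {k : Type*} [Field k] (s t : k) (h : s ≠ 0 ∨ t ≠ 0) :
    (!![s,t,0;0,s,0;t,0,0] : Matrix (Fin 3) (Fin 3) k).rank = 2 := by
  set A : Matrix (Fin 3) (Fin 3) k := !![s,t,0;0,s,0;t,0,0] with hA
  have hker : LinearMap.ker A.mulVecLin = Submodule.span k {(![0,0,1] : Fin 3 → k)} := by
    ext x
    rw [LinearMap.mem_ker, Submodule.mem_span_singleton]
    constructor
    · intro hx
      have h0 := congrFun hx 0
      have h1 := congrFun hx 1
      have h2 := congrFun hx 2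
      simp [hA, Matrix.mulVecLin_apply, Matrix.mulVec, dotProduct,
        Fin.sum_univ_three] at h0 h1 h2
      have hx0 : x 0 = 0 ∧ x 1 = 0 := by
        rcases h with hs | ht
        · have hx1 : x 1 = 0 := by
            exact h1.resolve_left hs
          have hx0 : x 0 = 0 := by
            rw [hx1, mul_zero, add_zero] at h0
            rcases mul_eq_zero.mp h0 with h' | h'
            · exact absurd h' hs
            · exact h'
          exact ⟨hx0, hx1⟩
        · have hx0 : x 0 = 0 := by
            exact h2.resolve_left ht
          have hx1 : x 1 = 0 := by
            rw [hx0, mul_zero, zero_add] at h0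
            rcases mul_eq_zero.mp h0 with h' | h'
            · exact absurd h' ht
            · exact h'
          exact ⟨hx0, hx1⟩
      refine ⟨x 2, ?_⟩
      funext i
      fin_cases i <;> simp [hx0.1, hx0.2]
    · rintro ⟨c, rfl⟩
      funext i
      fin_cases i <;>
        simp [hA, Matrix.mulVecLin_apply, Matrix.mulVec, dotProduct, Fin.sum_univ_three]
  have hrn := LinearMap.finrank_range_add_finrank_ker A.mulVecLin
  have hkd : Module.finrank k ↥(LinearMap.ker A.mulVecLin) = 1 := by
    rw [hker]
    exact finrank_span_singleton (by
      intro hc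
      have := congrFun hc 2
      simp at this)
  have hdom : Module.finrank k (Fin 3 → k) = 3 := by simp
  rw [hkd, hdom] at hrn
  have : Matrix.rank A = Module.finrank k ↥(LinearMap.range A.mulVecLin) := rfl
  omega

/-- On the secant cubic of the Segre fourfold there exist non-secant lines
(lines of type II) not contained in any embedded tangent space: there is a
2-dimensional space `L` of 3×3 matrices, all of whose nonzero elements have
rank exactly 2, such that `L ⊄ T_{a,b}` for all nonzero `a, b ∈ k³`. -/
theorem type_II_lines_exist_on_secant_segre
    (k : Type*) [Field k] [CharZero k] :
    ∃ L : Submodule k (Matrix (Fin 3) (Fin 3) k),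
      Module.finrank k L = 2 ∧
      (∀ A ∈ L, A ≠ 0 → A.rank = 2) ∧
      (∀ a b : Fin 3 → k, a ≠ 0 → b ≠ 0 →
        ¬ (∀ A ∈ L, ∃ u v : Fin 3 → k,
            A = Matrix.vecMulVec a u + Matrix.vecMulVec v b)) := by
  set M1 : Matrix (Fin 3) (Fin 3) k := !![1,0,0;0,1,0;0,0,0] with hM1def
  set M2 : Matrix (Fin 3) (Fin 3) k := !![0,1,0;0,0,0;1,0,0] with hM2def
  refine ⟨Submodule.span k {M1, M2}, ?_, ?_, ?_⟩
  · -- finrank = 2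
    have hli : LinearIndependent k ![M1, M2] := by
      rw [LinearIndependent.pair_iff]
      intro s t hst
      have h0 := congrFun (congrFun hst 0) 0
      have h1 := congrFun (congrFun hst 0) 1
      simp [hM1def, hM2def] at h0 h1
      exact ⟨h0, h1⟩
    have hrange : Set.range ![M1, M2] = {M1, M2} := by
      simp [Set.range_subset_iff, Set.pair_comm]
    rw [← hrange, finrank_span_eq_card hli]
    simp
  · -- rank of all nonzero elements is 2
    intro A hA hA0
    rw [Submodule.mem_span_pair] at hA
    obtain ⟨s, t, rfl⟩ := hA
    have hst : s ≠ 0 ∨ t ≠ 0 := by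
      by_contra hc
      push_neg at hc
      exact hA0 (by rw [hc.1, hc.2, zero_smul, zero_smul, add_zero])
    have heq : s • M1 + t • M2 = !![s,t,0;0,s,0;t,0,0] := by
      ext i j
      fin_cases i <;> fin_cases j <;> simp [hM1def, hM2def, Matrix.vecHead, Matrix.vecTail]
    rw [heq]
    exact rank_aux s t hst
  · -- not in any tangent space
    intro a b ha hb H
    obtain ⟨u1, v1, hm1⟩ := H M1 (Submodule.subset_span (by simp))
    obtain ⟨u2, v2, hm2⟩ := H M2 (Submodule.subset_span (by simp))
    -- entry equations for M1
    have h1 : ∀ i j, M1 i j = a i * u1 j + v1 i * b j := by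
      intro i j
      rw [hm1]
      simp [Matrix.vecMulVec_apply]
    have h2 : ∀ i j, M2 i j = a i * u2 j + v2 i * b j := by
      intro i j
      rw [hm2]
      simp [Matrix.vecMulVec_apply]
    have h100 : a 0 * u1 0 + v1 0 * b 0 = 1 := by have := h1 0 0; simp [hM1def, Matrix.vecHead, Matrix.vecTail] at this; linear_combination -this
    have h101 : a 0 * u1 1 + v1 0 * b 1 = 0 := by have := h1 0 1; simp [hM1def, Matrix.vecHead, Matrix.vecTail] at this; linear_combination -this
    have h102 : a 0 * u1 2 + v1 0 * b 2 = 0 := by have := h1 0 2; simp [hM1def, Matrix.vecHead, Matrix.vecTail] at this; linear_combination -this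
    have h110 : a 1 * u1 0 + v1 1 * b 0 = 0 := by have := h1 1 0; simp [hM1def, Matrix.vecHead, Matrix.vecTail] at this; linear_combination -this
    have h111 : a 1 * u1 1 + v1 1 * b 1 = 1 := by have := h1 1 1; simp [hM1def, Matrix.vecHead, Matrix.vecTail] at this; linear_combination -this
    have h112 : a 1 * u1 2 + v1 1 * b 2 = 0 := by have := h1 1 2; simp [hM1def, Matrix.vecHead, Matrix.vecTail] at this; linear_combination -this
    have h120 : a 2 * u1 0 + v1 2 * b 0 = 0 := by have := h1 2 0; simp [hM1def, Matrix.vecHead, Matrix.vecTail] at this; linear_combination -this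
    have h121 : a 2 * u1 1 + v1 2 * b 1 = 0 := by have := h1 2 1; simp [hM1def, Matrix.vecHead, Matrix.vecTail] at this; linear_combination -this
    have h200 : a 0 * u2 0 + v2 0 * b 0 = 0 := by have := h2 0 0; simp [hM2def, Matrix.vecHead, Matrix.vecTail] at this; linear_combination -this
    have h201 : a 0 * u2 1 + v2 0 * b 1 = 1 := by have := h2 0 1; simp [hM2def, Matrix.vecHead, Matrix.vecTail] at this; linear_combination -this
    have h210 : a 1 * u2 0 + v2 1 * b 0 = 0 := by have := h2 1 0; simp [hM2def, Matrix.vecHead, Matrix.vecTail] at this; linear_combination -this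
    have h211 : a 1 * u2 1 + v2 1 * b 1 = 0 := by have := h2 1 1; simp [hM2def, Matrix.vecHead, Matrix.vecTail] at this; linear_combination -this
    have h220 : a 2 * u2 0 + v2 2 * b 0 = 1 := by have := h2 2 0; simp [hM2def, Matrix.vecHead, Matrix.vecTail] at this; linear_combination -this
    have h221 : a 2 * u2 1 + v2 2 * b 1 = 0 := by have := h2 2 1; simp [hM2def, Matrix.vecHead, Matrix.vecTail] at this; linear_combination -this
    -- Step A : b 2 = 0
    have hq0 : a 0 * (u1 1 * b 2 - u1 2 * b 1) = 0 := by linear_combination b 2 * h101 - b 1 * h102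
    have hq1 : a 1 * (u1 1 * b 2 - u1 2 * b 1) = b 2 := by linear_combination b 2 * h111 - b 1 * h112
    have hr0 : a 0 * (u1 0 * b 2 - u1 2 * b 0) = b 2 := by linear_combination b 2 * h100 - b 0 * h102
    have hb2 : b 2 = 0 := by
      have key : b 2 * b 2 = 0 := by
        calc b 2 * b 2 = (a 1 * (u1 1 * b 2 - u1 2 * b 1)) * (a 0 * (u1 0 * b 2 - u1 2 * b 0)) := by
              rw [hq1, hr0]
          _ = (a 0 * (u1 1 * b 2 - u1 2 * b 1)) * (a 1 * (u1 0 * b 2 - u1 2 * b 0)) := by ring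
          _ = 0 := by rw [hq0, zero_mul]
      exact mul_self_eq_zero.mp key
    -- Step B : b 0 = 0 and b 1 = 0
    have e10 : a 0 * (b 0 * u1 1 - b 1 * u1 0) = -b 1 := by linear_combination b 0 * h101 - b 1 * h100
    have e11 : a 1 * (b 0 * u1 1 - b 1 * u1 0) = b 0 := by linear_combination b 0 * h111 - b 1 * h110
    have e12 : a 2 * (b 0 * u1 1 - b 1 * u1 0) = 0 := by linear_combination b 0 * h121 - b 1 * h120
    have e20 : a 0 * (b 0 * u2 1 - b 1 * u2 0) = b 0 := by linear_combination b 0 * h201 - b 1 * h200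
    have e21 : a 1 * (b 0 * u2 1 - b 1 * u2 0) = 0 := by linear_combination b 0 * h211 - b 1 * h210
    have e22 : a 2 * (b 0 * u2 1 - b 1 * u2 0) = -b 1 := by linear_combination b 0 * h221 - b 1 * h220
    have hb0 : b 0 = 0 := by
      have key : b 0 * b 0 = 0 := by
        calc b 0 * b 0
            = (a 1 * (b 0 * u1 1 - b 1 * u1 0)) * (a 0 * (b 0 * u2 1 - b 1 * u2 0)) := by
              rw [e11, e20]
          _ = (a 0 * (b 0 * u1 1 - b 1 * u1 0)) * (a 1 * (b 0 * u2 1 - b 1 * u2 0)) := by ring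
          _ = 0 := by rw [e21, mul_zero]
      exact mul_self_eq_zero.mp key
    have hb1 : b 1 = 0 := by
      have key : b 1 * b 1 = 0 := by
        calc b 1 * b 1
            = (-(a 0 * (b 0 * u1 1 - b 1 * u1 0))) * (-(a 2 * (b 0 * u2 1 - b 1 * u2 0))) := by
              rw [e10, e22]; ring
          _ = (a 2 * (b 0 * u1 1 - b 1 * u1 0)) * (a 0 * (b 0 * u2 1 - b 1 * u2 0)) := by ring
          _ = 0 := by rw [e12, zero_mul]
      exact mul_self_eq_zero.mp key
    exact hb (funext fun i => by fin_cases i <;> simp [hb0, hb1, hb2])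
end
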